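/- arXiv:2108.07324 — 8 statements merged into one kernel-verified Lean document; each statement's English description precedes it below -/
import Mathlib

section
/- For discrete random variables X and Y on a probability space, X is almost surely a function of Y if and only if every random variable U (on an extension of the probability space) that is independent of Y is also independent of X. -/
open MeasureTheory ProbabilityTheory
open scoped ENNReal unitInterval

/-!
If `X = f (Y)` almost surely, the same holds for any pair `(X', Y')` with the law of `(X, Y)`,
and independence from `Y'` passes to `f (Y')`. Otherwise there are `x₀, y₀` with
`0 < P(X = x₀ | Y = y₀) =: p < 1`. Toss an independent `p`-coin and let `U` be the indicator of
`X = x₀` on `{Y = y₀}` and the coin elsewhere: `P(U = 1 | Y = y) = p` for every `y`, so `U` is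
independent of `Y`, while `P(U = 1 | X = x₀) > p`.
-/

section

variable {Ω α β : Type*} [MeasurableSpace Ω] {μ : Measure Ω} {X : Ω → α} {Y : Ω → β}

lemma exists_ae_eq_comp_of_forall_ae [Countable β]
    (h : ∀ y, ∃ x, ∀ᵐ ω ∂μ, Y ω = y → X ω = x) :
    ∃ f : β → α, X =ᵐ[μ] fun ω => f (Y ω) := by
  choose f hf using h
  exact ⟨f, (ae_all_iff.2 hf).mono fun ω hω => hω (Y ω) rfl⟩

lemma exists_measure_ne_zero_of_not_ae_eq_comp [Countable α] [Countable β] [Nonempty α]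
    (h : ¬ ∃ f : β → α, X =ᵐ[μ] fun ω => f (Y ω)) :
    ∃ x y, μ (X ⁻¹' {x} ∩ Y ⁻¹' {y}) ≠ 0 ∧ μ (Y ⁻¹' {y} \ X ⁻¹' {x}) ≠ 0 := by
  by_contra! hcon
  refine h (exists_ae_eq_comp_of_forall_ae fun y => ?_)
  by_cases hy : ∃ x, μ (X ⁻¹' {x} ∩ Y ⁻¹' {y}) ≠ 0
  · obtain ⟨x, hx⟩ := hy
    exact ⟨x, measure_mono_null (fun ω hω => Classical.not_imp.1 hω) (hcon x y hx)⟩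
  · push Not at hy
    have hYy : ∀ᵐ ω ∂μ, Y ω ≠ y := by
      filter_upwards [ae_all_iff.2 fun x => measure_eq_zero_iff_ae_notMem.1 (hy x)] with ω hω
      exact fun hωy => hω (X ω) ⟨rfl, hωy⟩
    exact ⟨Classical.arbitrary α, hYy.mono fun ω hω hωy => absurd hωy hω⟩

lemma ae_eq_comp_of_map_eq {Ω' : Type*} [MeasurableSpace Ω'] {μ' : Measure Ω'}
    [MeasurableSpace α] [MeasurableSpace β] [Countable α] [Countable β]
    [MeasurableSingletonClass α] [MeasurableSingletonClass β]
    {X' : Ω' → α} {Y' : Ω' → β} (hX : Measurable X) (hY : Measurable Y)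
    (hX' : Measurable X') (hY' : Measurable Y')
    (hmap : μ'.map (fun ω => (X' ω, Y' ω)) = μ.map (fun ω => (X ω, Y ω)))
    {f : β → α} (hf : X =ᵐ[μ] fun ω => f (Y ω)) :
    X' =ᵐ[μ'] fun ω => f (Y' ω) :=
  (IdentDistrib.mk (hX.prodMk hY).aemeasurable (hX'.prodMk hY').aemeasurable hmap.symm).ae_snd
    (p := fun q => q.1 = f q.2) (Set.to_countable _).measurableSet hf

lemma exists_unitInterval_mul_eq {a b : ℝ≥0∞} (hab : a ≤ b) (hb : b ≠ ∞) :
    ∃ p : I, (unitInterval.toNNReal p : ℝ≥0∞) * b = a := by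
  rcases eq_or_ne b 0 with rfl | hb0
  · exact ⟨0, by simp [le_zero_iff.1 hab]⟩
  have hfin : a / b ≠ ∞ := ENNReal.div_ne_top (ne_top_of_le_ne_top hb hab) hb0
  have hle : a / b ≤ 1 := ENNReal.div_le_of_le_mul (by rwa [one_mul])
  have hp : (a / b).toReal ∈ I :=
    ⟨ENNReal.toReal_nonneg, ENNReal.toReal_le_of_le_ofReal zero_le_one (by simpa using hle)⟩
  refine ⟨⟨_, hp⟩, ?_⟩
  have hcoe : (unitInterval.toNNReal ⟨_, hp⟩ : ℝ≥0∞) = a / b := by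
    conv_rhs => rw [← ENNReal.coe_toNNReal hfin]
    rfl
  rw [hcoe, ENNReal.div_mul_cancel hb0 hb]

lemma indepFun_indicator_of_measure_inter_preimage_singleton [IsProbabilityMeasure μ]
    [MeasurableSpace β] [Countable β] [MeasurableSingletonClass β] {M : Type*} [Zero M]
    [MeasurableSpace M] (m : M) {E : Set Ω} (hE : MeasurableSet E) (hY : Measurable Y)
    {c : ℝ≥0∞} (h : ∀ y, μ (E ∩ Y ⁻¹' {y}) = c * μ (Y ⁻¹' {y})) :
    (E.indicator fun _ => m) ⟂ᵢ[μ] Y := by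
  have hlaw : (μ.restrict E).map Y = c • μ.map Y :=
    Measure.ext_of_singleton fun y => by
      rw [Measure.smul_apply, Measure.map_apply hY (measurableSet_singleton y),
        Measure.map_apply hY (measurableSet_singleton y), Measure.restrict_apply' hE,
        Set.inter_comm, h, smul_eq_mul]
  have hinter : ∀ t, MeasurableSet t → μ (E ∩ Y ⁻¹' t) = c * μ (Y ⁻¹' t) := fun t ht => by
    rw [Set.inter_comm, ← Measure.restrict_apply (hY ht), ← Measure.map_apply hY ht, hlaw,
      Measure.smul_apply, Measure.map_apply hY ht, smul_eq_mul]
  have hc : μ E = c := by simpa using hinter Set.univ MeasurableSet.univ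
  refine Indep.indicator_indepFun (m := .generateFrom {E}) m
    (MeasurableSpace.measurableSet_generateFrom rfl)
    (IndepSets.indep (MeasurableSpace.generateFrom_le fun _ hs => hs ▸ hE) hY.comap_le
      (IsPiSystem.singleton E)
      (@MeasurableSpace.isPiSystem_measurableSet _ (.comap Y inferInstance))
      rfl (@MeasurableSpace.generateFrom_measurableSet _ (.comap Y inferInstance)).symm
      ((IndepSets_iff _ _ μ).2 ?_))
  rintro s t rfl ⟨t, ht, rfl⟩
  rw [hinter t ht, hc]

/-- The event `U = 1` for the variable `U` on `Ω × Bool` equal to `1_A` on `B` and to the coin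
outside `B`. -/
def coinEvent (A B : Set Ω) : Set (Ω × Bool) := A ×ˢ Set.univ ∪ Bᶜ ×ˢ {true}

lemma measurableSet_coinEvent {A B : Set Ω} (hA : MeasurableSet A) (hB : MeasurableSet B) :
    MeasurableSet (coinEvent A B) :=
  (hA.prod .univ).union (hB.compl.prod (measurableSet_singleton true))

lemma prod_bernoulli_coinEvent_inter [SFinite μ] {A B T : Set Ω}
    (hB : MeasurableSet B) (hT : MeasurableSet T) (hAB : A ⊆ B) (p : I) :
    (μ.prod Ber(true, false, p)) (coinEvent A B ∩ T ×ˢ Set.univ)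
      = μ (T ∩ A) + unitInterval.toNNReal p * μ (T \ B) := by
  have hsplit : coinEvent A B ∩ T ×ˢ Set.univ = (T ∩ A) ×ˢ Set.univ ∪ (T \ B) ×ˢ {true} := by
    ext ⟨ω, b⟩
    simp only [coinEvent, Set.mem_inter_iff, Set.mem_union, Set.mem_prod, Set.mem_univ,
      Set.mem_compl_iff, Set.mem_singleton_iff, Set.mem_sdiff]
    tauto
  have hdisj : Disjoint ((T ∩ A) ×ˢ (Set.univ : Set Bool)) ((T \ B) ×ˢ {true}) :=
    Set.disjoint_prod.2 (Or.inl (Set.disjoint_left.2 fun ω hω hω' => hω'.2 (hAB hω.2)))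
  rw [hsplit, measure_union hdisj ((hT.diff hB).prod (measurableSet_singleton true)),
    Measure.prod_prod, Measure.prod_prod, measure_univ, mul_one,
    bernoulliMeasure_apply_of_mem_of_notMem p (measurableSet_singleton true) rfl (by simp),
    mul_comm]

lemma indicator_coinEvent_indepFun [IsProbabilityMeasure μ] [MeasurableSpace β] [Countable β]
    [MeasurableSingletonClass β] (hY : Measurable Y) {A : Set Ω} (hA : MeasurableSet A)
    {y₀ : β} (hAB : A ⊆ Y ⁻¹' {y₀}) {p : I}
    (hp : unitInterval.toNNReal p * μ (Y ⁻¹' {y₀}) = μ A) :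
    ((coinEvent A (Y ⁻¹' {y₀})).indicator fun _ => (1 : ℕ)) ⟂ᵢ[μ.prod Ber(true, false, p)]
      fun q => Y q.1 := by
  have hB : MeasurableSet (Y ⁻¹' {y₀}) := hY (measurableSet_singleton y₀)
  refine indepFun_indicator_of_measure_inter_preimage_singleton (c := unitInterval.toNNReal p) 1
    (measurableSet_coinEvent hA hB) (hY.comp measurable_fst) fun y => ?_
  have hYy : MeasurableSet (Y ⁻¹' {y}) := hY (measurableSet_singleton y)
  rw [show (fun q : Ω × Bool => Y q.1) ⁻¹' {y} = Prod.fst ⁻¹' (Y ⁻¹' {y}) from rfl,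
    ← Set.prod_univ, prod_bernoulli_coinEvent_inter hB hYy hAB, Measure.prod_prod, measure_univ,
    mul_one]
  rcases eq_or_ne y y₀ with rfl | hy
  · rw [Set.inter_eq_right.2 hAB, Set.sdiff_self, measure_empty, mul_zero, add_zero, hp]
  · have hdisj : Y ⁻¹' {y} ∩ A = ∅ :=
      Set.eq_empty_of_forall_notMem fun ω hω => hy (hω.1.symm.trans (hAB hω.2))
    have hdiff : Y ⁻¹' {y} \ Y ⁻¹' {y₀} = Y ⁻¹' {y} :=
      sdiff_eq_left.2 (Set.disjoint_left.2 fun ω hω hω' => hy (hω.symm.trans hω'))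
    rw [hdisj, hdiff, measure_empty, zero_add]

lemma not_indicator_coinEvent_indepFun [IsProbabilityMeasure μ] [MeasurableSpace α]
    [MeasurableSingletonClass α] (hX : Measurable X) {B : Set Ω} (hB : MeasurableSet B)
    {x₀ : α} {p : I} (hp : unitInterval.toNNReal p * μ B = μ (X ⁻¹' {x₀} ∩ B))
    (hA₀ : μ (X ⁻¹' {x₀} ∩ B) ≠ 0) (hBA : μ (B \ X ⁻¹' {x₀}) ≠ 0) :
    ¬ ((coinEvent (X ⁻¹' {x₀} ∩ B) B).indicator fun _ => (1 : ℕ)) ⟂ᵢ[μ.prod Ber(true, false, p)]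
      fun q => X q.1 := by
  intro hindep
  set S := X ⁻¹' {x₀}
  set r : ℝ≥0∞ := (unitInterval.toNNReal p : ℝ≥0∞)
  have hS : MeasurableSet S := hX (measurableSet_singleton x₀)
  have hAB' : S ∩ B ⊆ B := Set.inter_subset_right
  have hmul := hindep.measure_inter_preimage_eq_mul {1} {x₀} (measurableSet_singleton 1)
    (measurableSet_singleton x₀)
  have hE : ((coinEvent (S ∩ B) B).indicator fun _ => (1 : ℕ)) ⁻¹' {1} = coinEvent (S ∩ B) B := by
    ext q; by_cases hq : q ∈ coinEvent (S ∩ B) B <;> simp [hq]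
  have hEμ : (μ.prod Ber(true, false, p)) (coinEvent (S ∩ B) B) = r := by
    have := prod_bernoulli_coinEvent_inter (μ := μ) hB .univ hAB' p
    rwa [Set.univ_prod_univ, Set.inter_univ, Set.univ_inter, ← Set.compl_eq_univ_sdiff, ← hp,
      ← mul_add, measure_add_measure_compl hB, measure_univ, mul_one] at this
  rw [hE, show (fun q : Ω × Bool => X q.1) ⁻¹' {x₀} = Prod.fst ⁻¹' S from rfl, ← Set.prod_univ,
    prod_bernoulli_coinEvent_inter hB hS hAB', hEμ, Measure.prod_prod, measure_univ, mul_one,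
    Set.inter_eq_right.2 Set.inter_subset_left, ← measure_inter_add_sdiff S hB, mul_add] at hmul
  have hfix : μ (S ∩ B) = r * μ (S ∩ B) :=
    (ENNReal.add_left_inj (ENNReal.mul_ne_top ENNReal.coe_ne_top (measure_ne_top μ _))).1 hmul
  have hr : r = 1 := (ENNReal.mul_eq_right hA₀ (measure_ne_top μ _)).1 hfix.symm
  refine hBA ?_
  rw [← Set.sdiff_inter_self_eq_sdiff, measure_sdiff hAB' (hS.inter hB).nullMeasurableSet
    (measure_ne_top μ _), ← hp, hr, one_mul, tsub_self]

theorem stmt0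
    {Ω : Type} [MeasurableSpace Ω] (μ : Measure Ω) [IsProbabilityMeasure μ]
    (X Y : Ω → ℕ) (hX : Measurable X) (hY : Measurable Y) :
    (∃ f : ℕ → ℕ, X =ᵐ[μ] fun ω => f (Y ω)) ↔
      ∀ (Ω' : Type) [MeasurableSpace Ω'] (μ' : Measure Ω'),
        IsProbabilityMeasure μ' →
        ∀ (X' Y' U : Ω' → ℕ),
          Measurable X' → Measurable Y' → Measurable U →
          Measure.map (fun ω => (X' ω, Y' ω)) μ' = Measure.map (fun ω => (X ω, Y ω)) μ →
          IndepFun U Y' μ' → IndepFun U X' μ' := by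
  constructor
  · rintro ⟨f, hf⟩ Ω' _ μ' _ X' Y' U hX' hY' hU hmap hUY
    exact (hUY.comp measurable_id (measurable_of_countable f)).congr .rfl
      (ae_eq_comp_of_map_eq hX hY hX' hY' hmap hf).symm
  · intro H
    by_contra hnot
    obtain ⟨x₀, y₀, hA₀, hBA⟩ := exists_measure_ne_zero_of_not_ae_eq_comp hnot
    have hB : MeasurableSet (Y ⁻¹' {y₀}) := hY (measurableSet_singleton y₀)
    have hA : MeasurableSet (X ⁻¹' {x₀} ∩ Y ⁻¹' {y₀}) := (hX (measurableSet_singleton x₀)).inter hB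
    obtain ⟨p, hp⟩ := exists_unitInterval_mul_eq (measure_mono Set.inter_subset_right)
      (measure_ne_top μ (Y ⁻¹' {y₀}))
    refine not_indicator_coinEvent_indepFun hX hB hp hA₀ hBA
      (H _ _ inferInstance (fun q : Ω × Bool => X q.1) (fun q => Y q.1) _
        (hX.comp measurable_fst) (hY.comp measurable_fst) ?_ ?_
        (indicator_coinEvent_indepFun hY hA Set.inter_subset_right hp))
    · exact measurable_const.indicator (measurableSet_coinEvent hA hB)
    · rw [← Function.comp_def (fun ω => (X ω, Y ω)) Prod.fst,
        ← Measure.map_map (hX.prodMk hY) measurable_fst, Measure.map_fst_prod, measure_univ,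
        one_smul]
end
end

section
/- If X, Y, Z are discrete random variables such that each is almost surely a function of the other two (X is a function of (Y,Z), Y is a function of (X,Z), Z is a function of (X,Y)), and they are pairwise independent, then X, Y, and Z are each uniformly distributed over their (finite) supports, and the three supports have the same cardinality. -/
open MeasureTheory ProbabilityTheory
open scoped ENNReal

lemma atom_eq_atom {Ω : Type} [MeasurableSpace Ω] (μ : Measure Ω) [IsProbabilityMeasure μ]
    (U V W : Ω → ℕ) (hU : Measurable U) (hV : Measurable V) (hW : Measurable W)
    (hUf : ∃ f : ℕ × ℕ → ℕ, U =ᵐ[μ] fun ω => f (V ω, W ω))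
    (hVf : ∃ f : ℕ × ℕ → ℕ, V =ᵐ[μ] fun ω => f (U ω, W ω))
    (hWf : ∃ f : ℕ × ℕ → ℕ, W =ᵐ[μ] fun ω => f (U ω, V ω))
    (hUV : IndepFun U V μ) (hUW : IndepFun U W μ) (hVW : IndepFun V W μ)
    {u v : ℕ} (hu : μ (U ⁻¹' {u}) ≠ 0) (hv : μ (V ⁻¹' {v}) ≠ 0) :
    μ (U ⁻¹' {u}) = μ (V ⁻¹' {v}) := by
  obtain ⟨g, hg⟩ := hUf
  obtain ⟨h, hh⟩ := hVf
  obtain ⟨f, hf⟩ := hWf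
  set w := f (u, v) with hw
  set A := U ⁻¹' {u} with hA
  set B := V ⁻¹' {v} with hB
  set C := W ⁻¹' {w} with hC
  have mA : MeasurableSet A := hU (measurableSet_singleton u)
  have mB : MeasurableSet B := hV (measurableSet_singleton v)
  have mC : MeasurableSet C := hW (measurableSet_singleton w)
  have hAB : μ (A ∩ B) = μ A * μ B :=
    hUV.measure_inter_preimage_eq_mul _ _ (measurableSet_singleton u) (measurableSet_singleton v)
  have hAC : μ (A ∩ C) = μ A * μ C :=
    hUW.measure_inter_preimage_eq_mul _ _ (measurableSet_singleton u) (measurableSet_singleton w)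
  have hBC : μ (B ∩ C) = μ B * μ C :=
    hVW.measure_inter_preimage_eq_mul _ _ (measurableSet_singleton v) (measurableSet_singleton w)
  have hfnull : μ {ω | ¬ W ω = f (U ω, V ω)} = 0 := by
    have := hf
    rw [Filter.EventuallyEq, ae_iff] at this
    exact this
  have hgnull : μ {ω | ¬ U ω = g (V ω, W ω)} = 0 := by
    have := hg
    rw [Filter.EventuallyEq, ae_iff] at this
    exact this
  have hhnull : μ {ω | ¬ V ω = h (U ω, W ω)} = 0 := by
    have := hh
    rw [Filter.EventuallyEq, ae_iff] at this
    exact this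
  -- μ (A ∩ B ∩ C) = μ (A ∩ B)
  have hABC : μ (A ∩ B ∩ C) = μ (A ∩ B) := by
    have hnull : μ ((A ∩ B) \ C) = 0 := by
      refine measure_mono_null ?_ hfnull
      rintro ω ⟨⟨hA', hB'⟩, hC'⟩
      simp only [hA, hB, hC, Set.mem_preimage, Set.mem_singleton_iff] at hA' hB' hC'
      intro heq
      exact hC' (by rw [heq, hA', hB'])
    have := measure_inter_add_diff (μ := μ) (A ∩ B) mC
    rw [hnull, add_zero] at this
    exact this
  have habc_pos : μ (A ∩ B ∩ C) ≠ 0 := by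
    rw [hABC, hAB]; exact mul_ne_zero hu hv
  -- pick a good point
  have hNnull : μ ({ω | ¬ U ω = g (V ω, W ω)} ∪ {ω | ¬ V ω = h (U ω, W ω)}) = 0 :=
    measure_union_null hgnull hhnull
  have hpos : μ ((A ∩ B ∩ C) \ ({ω | ¬ U ω = g (V ω, W ω)} ∪ {ω | ¬ V ω = h (U ω, W ω)})) ≠ 0 := by
    rwa [measure_diff_null hNnull]
  obtain ⟨ω₀, hω₀⟩ := nonempty_of_measure_ne_zero hpos
  obtain ⟨⟨⟨hωA, hωB⟩, hωC⟩, hωN⟩ := hω₀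
  simp only [hA, hB, hC, Set.mem_preimage, Set.mem_singleton_iff] at hωA hωB hωC
  simp only [Set.mem_union, Set.mem_setOf_eq, not_or, not_not] at hωN
  have hgvw : g (v, w) = u := by rw [← hωA, ← hωB, ← hωC] at *; exact (hωN.1).symm
  have hhuw : h (u, w) = v := by rw [← hωA, ← hωB, ← hωC] at *; exact (hωN.2).symm
  -- μ (B ∩ C) = μ (A ∩ B ∩ C)
  have hBCA : μ (B ∩ C) = μ (A ∩ B ∩ C) := by
    have hnull : μ ((B ∩ C) \ A) = 0 := by
      refine measure_mono_null ?_ hgnull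
      rintro ω ⟨⟨hB', hC'⟩, hA'⟩
      simp only [hA, hB, hC, Set.mem_preimage, Set.mem_singleton_iff] at hA' hB' hC'
      intro heq
      exact hA' (by rw [heq, hB', hC', hgvw])
    have := measure_inter_add_diff (μ := μ) (B ∩ C) mA
    rw [hnull, add_zero] at this
    rw [← this]
    congr 1
    rw [Set.inter_comm, ← Set.inter_assoc]
  have hACB : μ (A ∩ C) = μ (A ∩ B ∩ C) := by
    have hnull : μ ((A ∩ C) \ B) = 0 := by
      refine measure_mono_null ?_ hhnull
      rintro ω ⟨⟨hA', hC'⟩, hB'⟩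
      simp only [hA, hB, hC, Set.mem_preimage, Set.mem_singleton_iff] at hA' hB' hC'
      intro heq
      exact hB' (by rw [heq, hA', hC', hhuw])
    have := measure_inter_add_diff (μ := μ) (A ∩ C) mB
    rw [hnull, add_zero] at this
    rw [← this]
    congr 1
    ext ω; simp only [Set.mem_inter_iff]; tauto
  have e1 : μ B * μ C = μ A * μ B := by rw [← hBC, hBCA, hABC, hAB]
  have e2 : μ A * μ C = μ A * μ B := by rw [← hAC, hACB, hABC, hAB]
  have hBne : μ B ≠ ∞ := (measure_lt_top μ B).ne
  have hAne : μ A ≠ ∞ := (measure_lt_top μ A).ne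
  have hCA : μ C = μ A := by
    rw [mul_comm (μ A) (μ B)] at e1
    exact (ENNReal.mul_right_inj hv hBne).mp e1
  have hCB : μ C = μ B := (ENNReal.mul_right_inj hu hAne).mp e2
  rw [← hCA, hCB]

theorem stmt1 {Ω : Type} [MeasurableSpace Ω] (μ : Measure Ω) [IsProbabilityMeasure μ]
    (X Y Z : Ω → ℕ) (hX : Measurable X) (hY : Measurable Y) (hZ : Measurable Z)
    (hXf : ∃ f : ℕ × ℕ → ℕ, X =ᵐ[μ] fun ω => f (Y ω, Z ω))
    (hYf : ∃ f : ℕ × ℕ → ℕ, Y =ᵐ[μ] fun ω => f (X ω, Z ω))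
    (hZf : ∃ f : ℕ × ℕ → ℕ, Z =ᵐ[μ] fun ω => f (X ω, Y ω))
    (hXY : IndepFun X Y μ) (hXZ : IndepFun X Z μ) (hYZ : IndepFun Y Z μ) :
    ∃ n : ℕ, 0 < n ∧
      {x | μ (X ⁻¹' {x}) ≠ 0}.ncard = n ∧
      {y | μ (Y ⁻¹' {y}) ≠ 0}.ncard = n ∧
      {z | μ (Z ⁻¹' {z}) ≠ 0}.ncard = n ∧
      (∀ x, μ (X ⁻¹' {x}) ≠ 0 → μ (X ⁻¹' {x}) = (n : ℝ≥0∞)⁻¹) ∧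
      (∀ y, μ (Y ⁻¹' {y}) ≠ 0 → μ (Y ⁻¹' {y}) = (n : ℝ≥0∞)⁻¹) ∧
      (∀ z, μ (Z ⁻¹' {z}) ≠ 0 → μ (Z ⁻¹' {z}) = (n : ℝ≥0∞)⁻¹) := by
  have hxy : ∀ {x y : ℕ}, μ (X ⁻¹' {x}) ≠ 0 → μ (Y ⁻¹' {y}) ≠ 0 →
      μ (X ⁻¹' {x}) = μ (Y ⁻¹' {y}) :=
    fun hx hy => atom_eq_atom μ X Y Z hX hY hZ hXf hYf hZf hXY hXZ hYZ hx hy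
  have hXf' : ∃ f : ℕ × ℕ → ℕ, X =ᵐ[μ] fun ω => f (Z ω, Y ω) := by
    obtain ⟨f, hf⟩ := hXf
    exact ⟨fun p => f (p.2, p.1), hf⟩
  have hxz : ∀ {x z : ℕ}, μ (X ⁻¹' {x}) ≠ 0 → μ (Z ⁻¹' {z}) ≠ 0 →
      μ (X ⁻¹' {x}) = μ (Z ⁻¹' {z}) :=
    fun hx hz => atom_eq_atom μ X Z Y hX hZ hY hXf' hZf hYf hXZ hXY hYZ.symm hx hz
  have hsum : ∀ (T : Ω → ℕ), Measurable T → ∑' t : ℕ, μ (T ⁻¹' {t}) = 1 := by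
    intro T hT
    have hd : Pairwise (Function.onFun Disjoint fun t : ℕ => T ⁻¹' {t}) := by
      intro i j hij
      apply Set.disjoint_left.mpr
      intro ω hi hj
      simp only [Set.mem_preimage, Set.mem_singleton_iff] at hi hj
      exact hij (hi ▸ hj ▸ rfl)
    rw [← measure_iUnion hd (fun t => hT (measurableSet_singleton t))]
    have : (⋃ t, T ⁻¹' {t}) = Set.univ := by ext ω; simp
    rw [this, measure_univ]
  have hex : ∀ (T : Ω → ℕ), Measurable T → ∃ t, μ (T ⁻¹' {t}) ≠ 0 := by
    intro T hT
    by_contra hcon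
    push_neg at hcon
    have := hsum T hT
    simp only [hcon, tsum_zero] at this
    exact zero_ne_one this
  obtain ⟨x₀, hx₀⟩ := hex X hX
  obtain ⟨y₀, hy₀⟩ := hex Y hY
  set c := μ (X ⁻¹' {x₀}) with hcdef
  have hc0 : c ≠ 0 := hx₀
  have hcx : ∀ x, μ (X ⁻¹' {x}) ≠ 0 → μ (X ⁻¹' {x}) = c :=
    fun x hx => (hxy hx hy₀).trans (hxy hx₀ hy₀).symm
  have hcy : ∀ y, μ (Y ⁻¹' {y}) ≠ 0 → μ (Y ⁻¹' {y}) = c :=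
    fun y hy => (hxy hx₀ hy).symm
  have hcz : ∀ z, μ (Z ⁻¹' {z}) ≠ 0 → μ (Z ⁻¹' {z}) = c :=
    fun z hz => (hxz hx₀ hz).symm
  have key : ∀ (T : Ω → ℕ), Measurable T → (∀ t, μ (T ⁻¹' {t}) ≠ 0 → μ (T ⁻¹' {t}) = c) →
      (({t | μ (T ⁻¹' {t}) ≠ 0}.ncard : ℝ≥0∞)) * c = 1 := by
    intro T hT hTc
    have hfin : {t | μ (T ⁻¹' {t}) ≠ 0}.Finite := by
      refine Set.Finite.subset (ENNReal.finite_const_le_of_tsum_ne_top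
        (a := fun t => μ (T ⁻¹' {t})) (by rw [hsum T hT]; exact ENNReal.one_ne_top) hc0) ?_
      intro t ht
      exact (hTc t ht).symm.le
    have h1 : ∑' t : ℕ, μ (T ⁻¹' {t}) = ∑ t ∈ hfin.toFinset, μ (T ⁻¹' {t}) := by
      refine tsum_eq_sum ?_
      intro t ht
      rw [Set.Finite.mem_toFinset] at ht
      simpa using ht
    have h2 : ∑ t ∈ hfin.toFinset, μ (T ⁻¹' {t}) = hfin.toFinset.card • c := by
      rw [Finset.sum_congr rfl (fun t ht => hTc t (by simpa using (Set.Finite.mem_toFinset hfin).mp ht)),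
        Finset.sum_const]
    have h3 : {t | μ (T ⁻¹' {t}) ≠ 0}.ncard = hfin.toFinset.card :=
      Set.ncard_eq_toFinset_card _ hfin
    rw [h3, ← nsmul_eq_mul, ← h2, ← h1, hsum T hT]
  have keyX := key X hX hcx
  have keyY := key Y hY hcy
  have keyZ := key Z hZ hcz
  set n := {x | μ (X ⁻¹' {x}) ≠ 0}.ncard with hn
  have hn0 : n ≠ 0 := by
    intro h0
    rw [h0] at keyX
    simp at keyX
  have hcval : c = (n : ℝ≥0∞)⁻¹ := by
    rw [mul_comm] at keyX
    exact ENNReal.eq_inv_of_mul_eq_one_left keyX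
  have hcast : ∀ m : ℕ, ((m : ℝ≥0∞)) * c = 1 → m = n := by
    intro m hm
    rw [mul_comm] at hm
    have := ENNReal.eq_inv_of_mul_eq_one_left hm
    have h2 : ((m : ℝ≥0∞))⁻¹ = ((n : ℝ≥0∞))⁻¹ := this ▸ hcval ▸ rfl
    exact Nat.cast_injective (inv_injective h2)
  refine ⟨n, Nat.pos_of_ne_zero hn0, rfl, hcast _ keyY, hcast _ keyZ,
    fun x hx => (hcx x hx).trans hcval, fun y hy => (hcy y hy).trans hcval,
    fun z hz => (hcz z hz).trans hcval⟩
end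

section
/- A discrete random variable X has support of cardinality at most 2 if and only if every random variable U that is almost surely a function of X but such that X is not almost surely a function of U, is almost surely constant. -/
open MeasureTheory ProbabilityTheory
open scoped ENNReal

/-!
Let `S` be the set of values that `X` takes with positive probability. Two functions `φ, ψ`
satisfy `φ ∘ X = ψ ∘ X` a.s. iff they agree on `S`. Hence `X` is a.s. a function of `f ∘ X` iff
`f` is injective on `S`, and `f ∘ X` is a.s. constant iff `f` is constant on `S`. The theorem
thus reduces to the fact that `|S| ≤ 2` iff every map is injective or constant on `S`; when `S`
has three points `x₁, x₂, x₃`, the indicator of `{x₁}ᶜ` is neither.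
-/

theorem Set.encard_le_two_iff_forall_injOn_or_const {α β : Type*} [Nontrivial β] {s : Set α} :
    s.encard ≤ 2 ↔ ∀ φ : α → β, s.InjOn φ ∨ ∃ c, ∀ x ∈ s, φ x = c := by
  classical
  constructor
  · intro hs φ
    refine or_iff_not_imp_left.2 fun hφ => ?_
    obtain ⟨x₁, hx₁, x₂, hx₂, hφx, hne⟩ : ∃ x₁ ∈ s, ∃ x₂ ∈ s, φ x₁ = φ x₂ ∧ x₁ ≠ x₂ := by
      simpa [Set.InjOn] using hφ
    have hs_eq : {x₁, x₂} = s := (Set.toFinite _).eq_of_subset_of_encard_le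
      (Set.pair_subset hx₁ hx₂) (hs.trans (Set.encard_pair hne).ge)
    refine ⟨φ x₁, fun x hx => ?_⟩
    rcases hs_eq ▸ hx with rfl | rfl
    exacts [rfl, hφx.symm]
  · intro h
    by_contra! hs
    obtain ⟨t, hts, ht⟩ := Set.exists_subset_encard_eq (Order.add_one_le_of_lt hs)
    obtain ⟨x₁, x₂, x₃, h₁₂, h₁₃, h₂₃, rfl⟩ := Set.encard_eq_three.1 ht
    obtain ⟨a, b, hab⟩ := exists_pair_ne β
    rcases h (fun x => if x = x₁ then a else b) with hinj | ⟨c, hc⟩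
    · exact h₂₃ (hinj (hts (by simp)) (hts (by simp)) (by simp [h₁₂.symm, h₁₃.symm]))
    · have h₁ := hc x₁ (hts (by simp))
      have h₂ := hc x₂ (hts (by simp))
      simp only [if_pos, if_neg h₁₂.symm] at h₁ h₂
      exact hab (h₁.trans h₂.symm)

namespace MeasureTheory

variable {Ω α β : Type*} [MeasurableSpace Ω] {μ : Measure Ω}

def valueSupport (μ : Measure Ω) (X : Ω → α) : Set α := {x | μ (X ⁻¹' {x}) ≠ 0}

theorem ae_mem_valueSupport [Countable α] (X : Ω → α) : ∀ᵐ ω ∂μ, X ω ∈ valueSupport μ X := by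
  have : {ω | X ω ∉ valueSupport μ X} = ⋃ x ∈ (valueSupport μ X)ᶜ, X ⁻¹' {x} := by ext; simp
  rw [ae_iff, this, measure_biUnion_null_iff (Set.to_countable _)]
  simp [valueSupport]

theorem comp_ae_eq_comp_iff_eqOn_valueSupport [Countable α] {X : Ω → α} {φ ψ : α → β} :
    (fun ω => φ (X ω)) =ᵐ[μ] (fun ω => ψ (X ω)) ↔ Set.EqOn φ ψ (valueSupport μ X) := by
  refine ⟨fun h x hx => by_contra fun hne => hx (measure_mono_null ?_ (ae_iff.1 h)), fun h => ?_⟩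
  · rintro ω rfl
    exact hne
  · filter_upwards [ae_mem_valueSupport X] with ω hω using h hω

theorem exists_ae_eq_comp_comp_iff_injOn [Countable α] [Nonempty α] {X : Ω → α} {f : α → β} :
    (∃ g : β → α, X =ᵐ[μ] fun ω => g (f (X ω))) ↔ (valueSupport μ X).InjOn f := by
  constructor
  · rintro ⟨g, hg⟩
    exact Set.LeftInvOn.injOn fun x hx =>
      (comp_ae_eq_comp_iff_eqOn_valueSupport (φ := id) (ψ := g ∘ f) |>.1 hg hx).symm
  · intro hf
    exact ⟨Function.invFunOn f _, comp_ae_eq_comp_iff_eqOn_valueSupport (φ := id) |>.2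
      fun x hx => (hf.leftInvOn_invFunOn hx).symm⟩

theorem exists_comp_ae_eq_const_iff [Countable α] {X : Ω → α} {φ : α → β} :
    (∃ c, (fun ω => φ (X ω)) =ᵐ[μ] fun _ => c) ↔ ∃ c, ∀ x ∈ valueSupport μ X, φ x = c :=
  exists_congr fun c => comp_ae_eq_comp_iff_eqOn_valueSupport (ψ := fun _ => c)

end MeasureTheory

theorem stmt2 {Ω : Type} [MeasurableSpace Ω] (μ : Measure Ω) [IsProbabilityMeasure μ]
    (X : Ω → ℕ) (hX : Measurable X) :
    {x | μ (X ⁻¹' {x}) ≠ 0}.encard ≤ 2 ↔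
      ∀ U : Ω → ℕ, Measurable U → (∃ f : ℕ → ℕ, U =ᵐ[μ] fun ω => f (X ω)) →
        ¬(∃ g : ℕ → ℕ, X =ᵐ[μ] fun ω => g (U ω)) →
        ∃ c, μ {ω | U ω = c} = 1 := by
  change (valueSupport μ X).encard ≤ 2 ↔ _
  rw [Set.encard_le_two_iff_forall_injOn_or_const (β := ℕ)]
  constructor
  · rintro h U hU ⟨f, hf⟩ hXU
    rcases h f with hinj | hconst
    · obtain ⟨g, hg⟩ := exists_ae_eq_comp_comp_iff_injOn.2 hinj
      exact absurd ⟨g, hg.trans (hf.fun_comp g).symm⟩ hXU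
    · obtain ⟨c, hc⟩ := exists_comp_ae_eq_const_iff.2 hconst
      exact ⟨c, (mem_ae_iff_prob_eq_one (hU (measurableSet_singleton c))).1 (hf.trans hc)⟩
  · intro h φ
    refine or_iff_not_imp_left.2 fun hinj => exists_comp_ae_eq_const_iff.1 ?_
    have hφX : Measurable fun ω => φ (X ω) := measurable_from_top.comp hX
    obtain ⟨c, hc⟩ := h _ hφX ⟨φ, .rfl⟩ (mt exists_ae_eq_comp_comp_iff_injOn.1 hinj)
    exact ⟨c, (mem_ae_iff_prob_eq_one (hφX (measurableSet_singleton c))).2 hc⟩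
end

section
/- For every n ≥ 1, a discrete random variable X has support of cardinality at most n if and only if: in the case n = 1, X is almost surely constant; and in the case n ≥ 2, every random variable U that is a.s. a function of X while X is not a.s. a function of U has support of cardinality at most n−1. -/
open MeasureTheory ProbabilityTheory Set
open scoped ENNReal

lemma ae_mem_supp {Ω : Type} [MeasurableSpace Ω] (μ : Measure Ω) (X : Ω → ℕ) :
    ∀ᵐ ω ∂μ, X ω ∈ {x | μ (X ⁻¹' {x}) ≠ 0} := by
  rw [ae_iff]
  refine measure_mono_null (t := ⋃ x ∈ {x : ℕ | μ (X ⁻¹' {x}) ≠ 0}ᶜ, X ⁻¹' {x}) ?_ ?_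
  · intro ω hω
    simp only [mem_setOf_eq, not_not] at hω
    exact mem_biUnion (by simpa using hω) rfl
  · rw [measure_biUnion_null_iff (Set.to_countable _)]
    intro x hx
    simpa using hx

lemma supp_comp {Ω : Type} [MeasurableSpace Ω] (μ : Measure Ω) (X : Ω → ℕ) (f : ℕ → ℕ) :
    {u | μ ((fun ω => f (X ω)) ⁻¹' {u}) ≠ 0} = f '' {x | μ (X ⁻¹' {x}) ≠ 0} := by
  ext u
  simp only [mem_setOf_eq, mem_image]
  constructor
  · intro h
    by_contra hc
    push_neg at hc
    apply h
    have he : (fun ω => f (X ω)) ⁻¹' {u} = ⋃ x ∈ {x : ℕ | f x = u}, X ⁻¹' {x} := by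
      ext ω; simp
    rw [he, measure_biUnion_null_iff (Set.to_countable _)]
    intro x hx
    by_contra h0
    exact (hc x h0) hx
  · rintro ⟨x, hx, rfl⟩
    intro h0
    refine hx (measure_mono_null ?_ h0)
    intro ω hω
    simp only [mem_preimage, mem_singleton_iff] at hω ⊢
    rw [hω]

lemma supp_ae_eq {Ω : Type} [MeasurableSpace Ω] (μ : Measure Ω) (U V : Ω → ℕ)
    (h : U =ᵐ[μ] V) : {u | μ (U ⁻¹' {u}) ≠ 0} = {u | μ (V ⁻¹' {u}) ≠ 0} := by
  ext u
  have : μ (U ⁻¹' {u}) = μ (V ⁻¹' {u}) := by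
    apply measure_congr
    apply Filter.eventuallyEq_set.2
    filter_upwards [h] with ω hω
    simp [hω]
  simp [mem_setOf_eq, this]

lemma supp_nonempty {Ω : Type} [MeasurableSpace Ω] (μ : Measure Ω) [IsProbabilityMeasure μ]
    (X : Ω → ℕ) : {x | μ (X ⁻¹' {x}) ≠ 0}.Nonempty := by
  by_contra h
  rw [Set.not_nonempty_iff_eq_empty] at h
  have : μ (⋃ x : ℕ, X ⁻¹' {x}) = 0 := by
    apply measure_iUnion_null
    intro x
    by_contra hx
    exact (Set.eq_empty_iff_forall_notMem.1 h x) hx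
  rw [show (⋃ x : ℕ, X ⁻¹' {x}) = Set.univ from by ext ω; simp] at this
  simp [measure_univ] at this

theorem stmt3 {Ω : Type} [MeasurableSpace Ω] (μ : Measure Ω) [IsProbabilityMeasure μ]
    (X : Ω → ℕ) (hX : Measurable X) (n : ℕ) (hn : 1 ≤ n) :
    (n = 1 →
      ({x | μ (X ⁻¹' {x}) ≠ 0}.encard ≤ 1 ↔ ∃ c, μ {ω | X ω = c} = 1)) ∧
    (2 ≤ n →
      ({x | μ (X ⁻¹' {x}) ≠ 0}.encard ≤ (n : ℕ∞) ↔
        ∀ U : Ω → ℕ, Measurable U → (∃ f : ℕ → ℕ, U =ᵐ[μ] fun ω => f (X ω)) →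
          ¬(∃ g : ℕ → ℕ, X =ᵐ[μ] fun ω => g (U ω)) →
          {u | μ (U ⁻¹' {u}) ≠ 0}.encard ≤ ((n - 1 : ℕ) : ℕ∞))) := by
  set S := {x | μ (X ⁻¹' {x}) ≠ 0} with hS
  constructor
  · rintro rfl
    constructor
    · intro h
      obtain ⟨x₀, hx₀⟩ := supp_nonempty μ X
      refine ⟨x₀, ?_⟩
      show μ (X ⁻¹' {x₀}) = 1
      rw [← prob_compl_eq_zero_iff (hX (measurableSet_singleton x₀))]
      have hsub : S ⊆ {x₀} := by
        intro y hy
        exact Set.encard_le_one_iff.1 h y x₀ hy hx₀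
      have := ae_mem_supp μ X
      rw [ae_iff] at this
      refine measure_mono_null ?_ this
      intro ω hω
      simp only [mem_compl_iff, mem_setOf_eq] at hω ⊢
      intro hmem
      exact hω (hsub hmem)
    · rintro ⟨c, hc⟩
      have hsub : S ⊆ {c} := by
        intro x hx
        by_contra hxc
        apply hx
        refine measure_mono_null ?_ ((prob_compl_eq_zero_iff (hX (measurableSet_singleton c))).2 (show μ (X ⁻¹' {c}) = 1 from hc))
        intro ω hω
        simp only [mem_preimage, mem_singleton_iff] at hω
        simp only [mem_compl_iff, mem_preimage, mem_singleton_iff]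
        rw [hω]
        simpa using hxc
      calc S.encard ≤ ({c} : Set ℕ).encard := Set.encard_mono hsub
        _ = 1 := Set.encard_singleton c
  · intro hn2
    constructor
    · -- forward
      intro h U hU ⟨f, hf⟩ hg
      have hsupp : {u | μ (U ⁻¹' {u}) ≠ 0} = f '' S := by
        rw [supp_ae_eq μ U _ hf, supp_comp]
      rw [hsupp]
      by_contra hcon
      push_neg at hcon
      have hle : (f '' S).encard ≤ S.encard := Set.encard_image_le f S
      have h1 : (f '' S).encard = (n : ℕ∞) := by
        refine le_antisymm (hle.trans h) ?_
        have h2 := Order.add_one_le_of_lt hcon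
        have h3 : ((n - 1 : ℕ) : ℕ∞) + 1 = (n : ℕ∞) := by
          exact_mod_cast congrArg (Nat.cast : ℕ → ℕ∞) (by omega : n - 1 + 1 = n)
        rwa [h3] at h2
      have hSn : S.encard = (n : ℕ∞) := le_antisymm h (h1 ▸ hle)
      have hfin : S.Finite := Set.finite_of_encard_eq_coe hSn
      have hinj : Set.InjOn f S := hfin.injOn_of_encard_image_eq (h1.trans hSn.symm)
      apply hg
      classical
      refine ⟨fun u => if hu : ∃ x ∈ S, f x = u then hu.choose else 0, ?_⟩
      filter_upwards [hf, ae_mem_supp μ X] with ω hω hmem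
      have hu : ∃ x ∈ S, f x = f (X ω) := ⟨X ω, hmem, rfl⟩
      rw [hω, dif_pos hu]
      exact (hinj hu.choose_spec.1 hmem hu.choose_spec.2).symm
    · -- backward
      intro hRHS
      by_contra hcon
      push_neg at hcon
      have hge : ((n + 1 : ℕ) : ℕ∞) ≤ S.encard := by
        have := Order.add_one_le_of_lt hcon
        simpa [Nat.cast_add, Nat.cast_one] using this
      obtain ⟨T, hTS, hT⟩ := Set.exists_subset_encard_eq hge
      obtain ⟨a, b, ha, hb, hab⟩ := Set.one_lt_encard_iff.1 (by
        rw [hT]; exact_mod_cast by omega : 1 < T.encard)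
      set f : ℕ → ℕ := fun x => if x = b then a else x with hfdef
      set U : Ω → ℕ := fun ω => f (X ω) with hUdef
      have hUm : Measurable U := (measurable_of_countable f).comp hX
      have key := hRHS U hUm ⟨f, Filter.EventuallyEq.rfl⟩ ?_
      · -- derive contradiction from cardinality
        have hsupp : {u | μ (U ⁻¹' {u}) ≠ 0} = f '' S := supp_comp μ X f
        rw [hsupp] at key
        have hsub : T \ {b} ⊆ f '' S := by
          rintro x ⟨hxT, hxb⟩
          refine ⟨x, hTS hxT, ?_⟩
          simp only [hfdef]
          rw [if_neg (by simpa using hxb)]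
        have hcard : (T \ {b}).encard = n := by
          rw [Set.encard_diff_singleton_of_mem hb, hT]
          rfl
        have : ((n : ℕ) : ℕ∞) ≤ ((n - 1 : ℕ) : ℕ∞) := by
          rw [← hcard]
          exact (Set.encard_mono hsub).trans key
        have : n ≤ n - 1 := by exact_mod_cast this
        omega
      · -- X is not a.s. a function of U
        rintro ⟨g, hgX⟩
        rw [Filter.EventuallyEq, ae_iff] at hgX
        have hga : g a = a := by
          obtain ⟨ω, hω⟩ : (X ⁻¹' {a} \ {ω | ¬ X ω = g (U ω)}).Nonempty := by
            apply nonempty_of_measure_ne_zero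
            rw [measure_diff_null hgX]
            exact hTS ha
          obtain ⟨hω1, hω2⟩ := hω
          simp only [mem_preimage, mem_singleton_iff] at hω1
          simp only [mem_setOf_eq, not_not] at hω2
          rw [hUdef] at hω2
          simp only [hfdef] at hω2
          rw [hω1, if_neg hab] at hω2
          exact hω2.symm
        have hgb : g a = b := by
          obtain ⟨ω, hω⟩ : (X ⁻¹' {b} \ {ω | ¬ X ω = g (U ω)}).Nonempty := by
            apply nonempty_of_measure_ne_zero
            rw [measure_diff_null hgX]
            exact hTS hb
          obtain ⟨hω1, hω2⟩ := hω
          simp only [mem_preimage, mem_singleton_iff] at hω1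
          simp only [mem_setOf_eq, not_not] at hω2
          rw [hUdef] at hω2
          simp only [hfdef] at hω2
          rw [hω1, if_pos rfl] at hω2
          exact hω2.symm
        exact hab (hga ▸ hgb)
end

section
/- Let X, Y be uniform random variables on finite supports of sizes a and b respectively. Then a ≤ b if and only if there exist random variables G and Ỹ such that G is uniform on a support of size a·b, Ỹ is uniform on a support of size b, and G is almost surely a function of (Y, Ỹ). -/
open MeasureTheory ProbabilityTheory
open scoped ENNReal

/-- `X` is uniformly distributed over a support of size `k`. -/
def UnifOn {Ω : Type} [MeasurableSpace Ω] (μ : Measure Ω) (X : Ω → ℕ) (k : ℕ) : Prop :=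
  ∃ S : Finset ℕ, S.card = k ∧
    ∀ x : ℕ, μ (X ⁻¹' {x}) = if x ∈ S then ((k : ℝ≥0∞))⁻¹ else 0

/-- The fiber-counting lemma: if for each `i < a` there is a unique `j < b` with `p i j`,
then the number of `ω : Fin (a*b)` with `p (ω/b) (ω%b)` is `a`. -/
lemma card_fiber {a b : ℕ} (hb : 0 < b) (p : ℕ → ℕ → Prop) [∀ i j, Decidable (p i j)]
    (j0 : ℕ → ℕ)
    (hj0 : ∀ i < a, j0 i < b ∧ p i (j0 i) ∧ ∀ j < b, p i j → j = j0 i) :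
    (Finset.univ.filter fun ω : Fin (a * b) => p (ω.val / b) (ω.val % b)).card = a := by
  have hlt : ∀ i, i < a → b * i + j0 i < a * b := by
    intro i hi
    have h1 : j0 i < b := (hj0 i hi).1
    calc b * i + j0 i < b * i + b := by omega
      _ = b * (i + 1) := by ring
      _ ≤ b * a := Nat.mul_le_mul_left b hi
      _ = a * b := Nat.mul_comm _ _
  have hdiv : ∀ i, i < a → (b * i + j0 i) / b = i := by
    intro i hi
    rw [Nat.mul_add_div hb, Nat.div_eq_of_lt (hj0 i hi).1, Nat.add_zero]
  have hmod : ∀ i, i < a → (b * i + j0 i) % b = j0 i := by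
    intro i hi
    rw [Nat.mul_add_mod, Nat.mod_eq_of_lt (hj0 i hi).1]
  apply Finset.card_eq_of_bijective (fun i hi => (⟨b * i + j0 i, hlt i hi⟩ : Fin (a * b)))
  · intro ω hω
    simp only [Finset.mem_filter, Finset.mem_univ, true_and] at hω
    have hi : ω.val / b < a := Nat.div_lt_of_lt_mul (lt_of_lt_of_eq ω.isLt (Nat.mul_comm a b))
    refine ⟨ω.val / b, hi, ?_⟩
    have hj : ω.val % b = j0 (ω.val / b) := (hj0 _ hi).2.2 _ (Nat.mod_lt _ hb) hω
    apply Fin.ext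
    simp only [← hj]
    exact Nat.div_add_mod _ _
  · intro i hi
    simp only [Finset.mem_filter, Finset.mem_univ, true_and, hdiv i hi, hmod i hi]
    exact (hj0 i hi).2.1
  · intro i j hi hj h
    have := congrArg Fin.val h
    simp only at this
    have h1 := hdiv i hi
    have h2 := hdiv j hj
    rw [this, h2] at h1
    exact h1.symm

/-- Total mass outside the support of a uniform variable is zero. -/
lemma unif_support_ae {Ω : Type} [MeasurableSpace Ω] (μ : Measure Ω) [IsProbabilityMeasure μ]
    (Z : Ω → ℕ) (hZ : Measurable Z) (k : ℕ) (hk : 1 ≤ k) (S : Finset ℕ) (hcard : S.card = k)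
    (hval : ∀ x : ℕ, μ (Z ⁻¹' {x}) = if x ∈ S then ((k : ℝ≥0∞))⁻¹ else 0) :
    μ (Z ⁻¹' (↑S)ᶜ) = 0 := by
  have hk0 : ((k : ℝ≥0∞)) ≠ 0 := by exact_mod_cast (by omega : k ≠ 0)
  have hkT : ((k : ℝ≥0∞)) ≠ ⊤ := ENNReal.natCast_ne_top k
  have hmeas : MeasurableSet (Z ⁻¹' ↑S) := hZ S.measurableSet
  have h1 : μ (Z ⁻¹' ↑S) = 1 := by
    have hU : Z ⁻¹' ↑S = ⋃ x ∈ S, Z ⁻¹' {x} := by ext ω; simp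
    rw [hU, measure_biUnion_finset]
    · rw [Finset.sum_congr rfl (fun x hx => by rw [hval x, if_pos hx]),
        Finset.sum_const, hcard, nsmul_eq_mul]
      exact ENNReal.mul_inv_cancel hk0 hkT
    · intro x _ y _ hxy
      exact (Set.disjoint_singleton.mpr hxy).preimage Z
    · intro x _
      exact hZ (measurableSet_singleton x)
  have : Z ⁻¹' (↑S)ᶜ = (Z ⁻¹' ↑S)ᶜ := rfl
  rw [this, measure_compl hmeas (measure_ne_top μ _), h1, measure_univ, tsub_self]

theorem stmt5 {Ω : Type} [MeasurableSpace Ω] (μ : Measure Ω) [IsProbabilityMeasure μ]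
    (X Y : Ω → ℕ) (hX : Measurable X) (hY : Measurable Y)
    (a b : ℕ) (ha : 1 ≤ a) (hb : 1 ≤ b)
    (hXu : UnifOn μ X a) (hYu : UnifOn μ Y b) :
    a ≤ b ↔
      ∃ (Ω' : Type) (_ : MeasurableSpace Ω') (μ' : Measure Ω'),
        IsProbabilityMeasure μ' ∧
        ∃ Y' G Yt : Ω' → ℕ,
          Measurable Y' ∧ Measurable G ∧ Measurable Yt ∧
          Measure.map Y' μ' = Measure.map Y μ ∧
          UnifOn μ' G (a * b) ∧ UnifOn μ' Yt b ∧
          ∃ f : ℕ × ℕ → ℕ, G =ᵐ[μ'] fun ω => f (Y' ω, Yt ω) := by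
  classical
  have hb0 : 0 < b := hb
  have ha0 : 0 < a := ha
  have hab0 : 0 < a * b := Nat.mul_pos ha0 hb0
  have habne : ((a * b : ℕ) : ℝ≥0∞) ≠ 0 := by exact_mod_cast hab0.ne'
  have habnt : ((a * b : ℕ) : ℝ≥0∞) ≠ ⊤ := ENNReal.natCast_ne_top _
  constructor
  · -- forward direction
    intro hab
    obtain ⟨S, hScard, hSval⟩ := hYu
    set μ' : Measure (Fin (a * b)) := (((a * b : ℕ) : ℝ≥0∞))⁻¹ • Measure.count with hμ'def
    have hμ'f : ∀ s : Finset (Fin (a * b)), μ' ↑s = (((a * b : ℕ) : ℝ≥0∞))⁻¹ * s.card := by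
      intro s
      rw [hμ'def, Measure.smul_apply, Measure.count_apply_finset, smul_eq_mul]
    have hprob : IsProbabilityMeasure μ' := by
      constructor
      have : (Set.univ : Set (Fin (a * b))) = ↑(Finset.univ : Finset (Fin (a * b))) := by simp
      rw [this, hμ'f, Finset.card_univ, Fintype.card_fin]
      exact ENNReal.inv_mul_cancel habne habnt
    set g : Fin b ↪o ℕ := S.orderEmbOfFin hScard with hgdef
    have hginj : Function.Injective (fun j : Fin b => (g j : ℕ)) := fun x y h => g.injective h
    set Y' : Fin (a * b) → ℕ := fun ω => g ⟨ω.val % b, Nat.mod_lt _ hb0⟩ with hY'def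
    set G : Fin (a * b) → ℕ := fun ω => ω.val with hGdef
    set Yt : Fin (a * b) → ℕ := fun ω => (ω.val % b + ω.val / b) % b with hYtdef
    refine ⟨Fin (a * b), inferInstance, μ', hprob, Y', G, Yt,
      measurable_of_countable _, measurable_of_countable _, measurable_of_countable _,
      ?_, ?_, ?_, ?_⟩
    · -- map Y' μ' = map Y μ
      apply Measure.ext_of_singleton
      intro x
      rw [Measure.map_apply (measurable_of_countable _) (measurableSet_singleton x),
        Measure.map_apply hY (measurableSet_singleton x), hSval]
      by_cases hx : x ∈ S
      · rw [if_pos hx]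
        -- x = g j for some j
        have : x ∈ Set.range (fun j : Fin b => (g j : ℕ)) := by
          rw [hgdef]
          have := Finset.range_orderEmbOfFin S hScard
          rw [show (fun j : Fin b => ((S.orderEmbOfFin hScard) j : ℕ)) = ⇑(S.orderEmbOfFin hScard) from rfl, this]
          exact hx
        obtain ⟨j, hj⟩ := this
        have hpre : Y' ⁻¹' {x} =
            ↑(Finset.univ.filter fun ω : Fin (a * b) => ω.val % b = j.val) := by
          ext ω
          simp only [Set.mem_preimage, Set.mem_singleton_iff, Finset.coe_filter,
            Set.mem_setOf_eq, Finset.mem_univ, true_and, hY'def]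
          constructor
          · intro h
            have : (⟨ω.val % b, Nat.mod_lt _ hb0⟩ : Fin b) = j := hginj (h.trans hj.symm)
            exact congrArg Fin.val this
          · intro h
            have : (⟨ω.val % b, Nat.mod_lt _ hb0⟩ : Fin b) = j := Fin.ext h
            rw [this]
            exact hj
        rw [hpre, hμ'f]
        have hcard : (Finset.univ.filter fun ω : Fin (a * b) => ω.val % b = j.val).card = a := by
          have := card_fiber (a := a) hb0 (fun _ jj => jj = j.val) (fun _ => j.val)
            (fun i _ => ⟨j.isLt, rfl, fun jj _ h => h⟩)
          convert this using 2
        rw [hcard]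
        -- (a*b)⁻¹ * a = b⁻¹
        have hane : ((a : ℕ) : ℝ≥0∞) ≠ 0 := by exact_mod_cast ha0.ne'
        have hbne : ((b : ℕ) : ℝ≥0∞) ≠ 0 := by exact_mod_cast hb0.ne'
        rw [Nat.cast_mul, ENNReal.mul_inv (Or.inl hane) (Or.inl (ENNReal.natCast_ne_top _))]
        rw [mul_comm ((a : ℝ≥0∞))⁻¹ ((b : ℝ≥0∞))⁻¹, mul_assoc,
          ENNReal.inv_mul_cancel hane (ENNReal.natCast_ne_top _), mul_one]
      · rw [if_neg hx]
        have hpre : Y' ⁻¹' {x} = ∅ := by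
          ext ω
          simp only [Set.mem_preimage, Set.mem_singleton_iff, Set.mem_empty_iff_false,
            iff_false, hY'def]
          intro h
          exact hx (h ▸ Finset.orderEmbOfFin_mem S hScard _)
        rw [hpre, measure_empty]
    · -- UnifOn μ' G (a*b)
      refine ⟨Finset.range (a * b), Finset.card_range _, fun x => ?_⟩
      by_cases hx : x ∈ Finset.range (a * b)
      · rw [if_pos hx]
        rw [Finset.mem_range] at hx
        have hpre : G ⁻¹' {x} = ↑({(⟨x, hx⟩ : Fin (a * b))} : Finset (Fin (a * b))) := by
          ext ω
          simp only [Set.mem_preimage, Set.mem_singleton_iff, Finset.coe_singleton, hGdef]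
          exact ⟨fun h => Fin.ext h, fun h => congrArg Fin.val h⟩
        rw [hpre, hμ'f, Finset.card_singleton, Nat.cast_one, mul_one]
      · rw [if_neg hx]
        rw [Finset.mem_range] at hx
        have hpre : G ⁻¹' {x} = ∅ := by
          ext ω
          simp only [Set.mem_preimage, Set.mem_singleton_iff, Set.mem_empty_iff_false,
            iff_false, hGdef]
          intro h
          exact hx (h ▸ ω.isLt)
        rw [hpre, measure_empty]
    · -- UnifOn μ' Yt b
      refine ⟨Finset.range b, Finset.card_range _, fun t => ?_⟩
      by_cases ht : t ∈ Finset.range b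
      · rw [if_pos ht]
        rw [Finset.mem_range] at ht
        have hpre : Yt ⁻¹' {t} =
            ↑(Finset.univ.filter fun ω : Fin (a * b) => (ω.val % b + ω.val / b) % b = t) := by
          ext ω
          simp [hYtdef]
        rw [hpre, hμ'f]
        have hcard : (Finset.univ.filter
            fun ω : Fin (a * b) => (ω.val % b + ω.val / b) % b = t).card = a := by
          have huniq : ∀ i < a, (t + b - i) % b < b ∧ ((t + b - i) % b + i) % b = t ∧
              ∀ j < b, (j + i) % b = t → j = (t + b - i) % b := by
            intro i hi
            have hib : i < b := lt_of_lt_of_le hi hab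
            refine ⟨Nat.mod_lt _ hb0, ?_, ?_⟩
            · rw [Nat.mod_add_mod]
              have : t + b - i + i = t + b := by omega
              rw [this, Nat.add_mod_right, Nat.mod_eq_of_lt ht]
            · intro j hj hjt
              have h2 : ((t + b - i) % b + i) % b = t := by
                rw [Nat.mod_add_mod]
                have : t + b - i + i = t + b := by omega
                rw [this, Nat.add_mod_right, Nat.mod_eq_of_lt ht]
              have : (j + i) % b = ((t + b - i) % b + i) % b := by rw [hjt, h2]
              have hmodeq : j % b = ((t + b - i) % b) % b := by
                have := Nat.ModEq.add_right_cancel' i this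
                exact this
              rwa [Nat.mod_eq_of_lt hj, Nat.mod_eq_of_lt (Nat.mod_lt _ hb0)] at hmodeq
          have := card_fiber (a := a) hb0 (fun i j => (j + i) % b = t)
            (fun i => (t + b - i) % b) huniq
          convert this using 2
        rw [hcard]
        have hane : ((a : ℕ) : ℝ≥0∞) ≠ 0 := by exact_mod_cast ha0.ne'
        rw [Nat.cast_mul, ENNReal.mul_inv (Or.inl hane) (Or.inl (ENNReal.natCast_ne_top _))]
        rw [mul_comm ((a : ℝ≥0∞))⁻¹ ((b : ℝ≥0∞))⁻¹, mul_assoc,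
          ENNReal.inv_mul_cancel hane (ENNReal.natCast_ne_top _), mul_one]
      · rw [if_neg ht]
        rw [Finset.mem_range] at ht
        have hpre : Yt ⁻¹' {t} = ∅ := by
          ext ω
          simp only [Set.mem_preimage, Set.mem_singleton_iff, Set.mem_empty_iff_false,
            iff_false, hYtdef]
          intro h
          exact ht (h ▸ Nat.mod_lt _ hb0)
        rw [hpre, measure_empty]
    · -- the function f
      have hne : Nonempty (Fin b) := ⟨⟨0, hb0⟩⟩
      set ginv : ℕ → Fin b := Function.invFun (fun j : Fin b => (g j : ℕ)) with hginvdef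
      have hli : ∀ j : Fin b, ginv (g j) = j :=
        Function.leftInverse_invFun hginj
      refine ⟨fun p => ((p.2 + b - (ginv p.1).val) % b) * b + (ginv p.1).val, ?_⟩
      apply Filter.Eventually.of_forall
      intro ω
      have hj : ginv (Y' ω) = ⟨ω.val % b, Nat.mod_lt _ hb0⟩ := hli _
      have hjb : ω.val % b < b := Nat.mod_lt _ hb0
      have hib : ω.val / b < b := lt_of_lt_of_le
        (Nat.div_lt_of_lt_mul (lt_of_lt_of_eq ω.isLt (Nat.mul_comm a b))) hab
      have key : ∀ j i : ℕ, j < b → i < b → ((j + i) % b + b - j) % b = i := by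
        intro j i hjb' hib'
        by_cases hc : j + i < b
        · rw [Nat.mod_eq_of_lt hc]
          have h : j + i + b - j = i + b := by omega
          rw [h, Nat.add_mod_right, Nat.mod_eq_of_lt hib']
        · push_neg at hc
          have hmod : (j + i) % b = j + i - b := by
            rw [Nat.mod_eq_sub_mod hc, Nat.mod_eq_of_lt (by omega)]
          rw [hmod]
          have h : j + i - b + b - j = i := by omega
          rw [h, Nat.mod_eq_of_lt hib']
      show G ω = ((Yt ω + b - (ginv (Y' ω)).val) % b) * b + (ginv (Y' ω)).val
      rw [hj]
      show ω.val = (((ω.val % b + ω.val / b) % b + b - ω.val % b) % b) * b + ω.val % b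
      rw [key _ _ hjb hib, Nat.mul_comm (ω.val / b) b]
      exact (Nat.div_add_mod _ _).symm
  · -- backward direction
    rintro ⟨Ω', mΩ', μ', hμ', Y', G, Yt, hY', hG, hYt, hmap, ⟨SG, hSGcard, hSGval⟩,
      ⟨St, hStcard, hStval⟩, f, hae⟩
    obtain ⟨SY, hSYcard, hSYval⟩ := hYu
    have hYval' : ∀ x : ℕ, μ' (Y' ⁻¹' {x}) = if x ∈ SY then ((b : ℝ≥0∞))⁻¹ else 0 := by
      intro x
      rw [← Measure.map_apply hY' (measurableSet_singleton x), hmap,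
        Measure.map_apply hY (measurableSet_singleton x)]
      exact hSYval x
    have hY0 : μ' (Y' ⁻¹' (↑SY)ᶜ) = 0 := unif_support_ae μ' Y' hY' b hb SY hSYcard hYval'
    have hT0 : μ' (Yt ⁻¹' (↑St)ᶜ) = 0 := unif_support_ae μ' Yt hYt b hb St hStcard hStval
    have hF0 : μ' {ω | ¬ G ω = f (Y' ω, Yt ω)} = 0 := hae
    set N : Set Ω' := {ω | ¬ G ω = f (Y' ω, Yt ω)} ∪ Y' ⁻¹' (↑SY)ᶜ ∪ Yt ⁻¹' (↑St)ᶜ with hNdef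
    have hN0 : μ' N = 0 :=
      measure_union_null (measure_union_null hF0 hY0) hT0
    have key : ∀ x ∈ SG, (G ⁻¹' {x} \ N).Nonempty := by
      intro x hx
      apply MeasureTheory.nonempty_of_measure_ne_zero (μ := μ')
      rw [measure_diff_null hN0, hSGval x, if_pos hx]
      exact ENNReal.inv_ne_zero.mpr habnt
    set p : ℕ → ℕ × ℕ := fun x =>
      if h : (G ⁻¹' {x} \ N).Nonempty then (Y' h.choose, Yt h.choose) else (0, 0) with hpdef
    have hprop : ∀ x ∈ SG, p x ∈ SY ×ˢ St ∧ f (p x) = x := by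
      intro x hx
      have h := key x hx
      obtain ⟨hωG, hωN⟩ := h.choose_spec
      have h1 : G h.choose = f (Y' h.choose, Yt h.choose) :=
        not_not.mp (fun hc => hωN (Or.inl (Or.inl hc)))
      have h2 : Y' h.choose ∈ SY := by
        by_contra hc
        exact hωN (Or.inl (Or.inr hc))
      have h3 : Yt h.choose ∈ St := by
        by_contra hc
        exact hωN (Or.inr hc)
      have hGx : G h.choose = x := hωG
      rw [hpdef]
      simp only [dif_pos h]
      exact ⟨Finset.mem_product.mpr ⟨h2, h3⟩, by rw [← h1, hGx]⟩
    have hcard : SG.card ≤ (SY ×ˢ St).card := by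
      apply Finset.card_le_card_of_injOn p (fun x hx => (hprop x hx).1)
      intro x hx y hy hxy
      rw [← (hprop x hx).2, ← (hprop y hy).2, hxy]
    rw [hSGcard, Finset.card_product, hSYcard, hStcard] at hcard
    exact Nat.le_of_mul_le_mul_right hcard hb0
end

section
/- Let X, Y, Z be uniform random variables with support sizes a, b, c respectively where a ≠ b, and let U be a binary non-uniform random variable. Suppose there exist X̃, Ỹ with X̃ uniform of support size a, Ỹ uniform of support size b, X̃, Ỹ, U mutually independent, U a.s. a function of Z, Z a.s. a function of (X̃, Ỹ, U), and every single-mass indicator of Z is a single-mass indicator of (X̃,U) or of (Ỹ,U). Then c = a + b and U ∼ Bern(a/(a+b)) up to relabeling. -/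
/-!
Each atom `{Z = z}` of `Z` carries mass `1/c`, and is (a.s.) an atom `{X̃ = x, U = u}` or
`{Ỹ = y, U = u}`; by independence its mass is `P(U = u)/a` or `P(U = u)/b`. Every atom of `U`
meets some atom of `Z` in positive measure, which forces that atom of `Z` into it, so each of the
two masses of `U` is `a/c` or `b/c`. They differ, so one is `a/c` and the other `b/c`, and since
they sum to `1`, `c = a + b`.
-/

open MeasureTheory ProbabilityTheory
open scoped ENNReal

section

variable {Ω β : Type*} [MeasurableSpace Ω] {μ : Measure Ω}

lemma exists_measure_preimage_singleton_inter_ne_zero [Countable β] (Z : Ω → β) {s : Set Ω}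
    (hs : μ s ≠ 0) : ∃ z, μ (Z ⁻¹' {z} ∩ s) ≠ 0 := by
  have hcover : (⋃ z, Z ⁻¹' {z} ∩ s) = s := Set.ext fun ω => by simp
  obtain ⟨z, hz⟩ := exists_measure_pos_of_not_measure_iUnion_null (hcover ▸ hs)
  exact ⟨z, hz.ne'⟩

lemma measure_preimage_add_eq_one_of_encard_eq_two [IsProbabilityMeasure μ] [MeasurableSpace β]
    [MeasurableSingletonClass β] [Countable β] {U : Ω → β} (hU : Measurable U)
    (hcard : {u | μ (U ⁻¹' {u}) ≠ 0}.encard = 2) {u₁ u₂ : β} (hne : u₁ ≠ u₂)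
    (h₁ : μ (U ⁻¹' {u₁}) ≠ 0) (h₂ : μ (U ⁻¹' {u₂}) ≠ 0) :
    μ (U ⁻¹' {u₁}) + μ (U ⁻¹' {u₂}) = 1 := by
  have hsupp : ({u₁, u₂} : Set β) = {u | μ (U ⁻¹' {u}) ≠ 0} := by
    refine (Set.toFinite _).eq_of_subset_of_encard_le ?_ ?_
    · simp [Set.insert_subset_iff, h₁, h₂]
    · simp [hcard, Set.encard_pair hne]
  have hnull : μ (U ⁻¹' {u₁, u₂}ᶜ) = 0 :=
    (measure_preimage_eq_zero_iff_of_countable (Set.to_countable _)).2 fun u hu => by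
      rw [hsupp] at hu
      simpa using hu
  rw [← measure_union ((Set.disjoint_singleton.2 hne).preimage U)
      (hU (measurableSet_singleton _)), ← Set.preimage_union, ← Set.insert_eq,
    ← prob_compl_eq_zero_iff (hU (Set.toFinite _).measurableSet), ← Set.preimage_compl]
  exact hnull

end

lemma eq_add_of_div_add_div_eq_one {a b c : ℕ} (h : (a : ℝ≥0∞) / c + b / c = 1) :
    c = a + b := by
  rw [ENNReal.div_add_div_same] at h
  -- in `ℝ≥0∞`, `x / 0` is `0` or `∞`, never `1`
  have hc : (c : ℝ≥0∞) ≠ 0 := by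
    rintro hc
    rw [hc] at h
    rcases eq_or_ne ((a : ℝ≥0∞) + b) 0 with h0 | h0
    · simp [h0] at h
    · simp [ENNReal.div_zero h0] at h
  exact_mod_cast ((ENNReal.div_eq_one_iff hc (ENNReal.natCast_ne_top c)).1 h).symm

namespace UnifOn

variable {Ω : Type} [MeasurableSpace Ω] {μ : Measure Ω}

lemma measure_preimage_singleton {X : Ω → ℕ} {k x : ℕ} (hX : UnifOn μ X k)
    (hx : μ (X ⁻¹' {x}) ≠ 0) : μ (X ⁻¹' {x}) = (k : ℝ≥0∞)⁻¹ := by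
  obtain ⟨S, -, hS⟩ := hX
  rw [hS x] at hx ⊢
  split_ifs at hx ⊢
  · rfl
  · exact absurd rfl hx

lemma measure_preimage_eq_mul_of_ae_eq_inter [IsFiniteMeasure μ] {β : Type*}
    [MeasurableSpace β] [MeasurableSingletonClass β] {W : Ω → ℕ} {U : Ω → β} {k x : ℕ}
    {u u' : β} {A : Set Ω}
    (hW : UnifOn μ W k) (hWU : IndepFun W U μ)
    (hA : A =ᵐ[μ] {ω | W ω = x ∧ U ω = u'}) (hAu : μ (A ∩ U ⁻¹' {u}) ≠ 0) :
    μ (U ⁻¹' {u}) = k * μ A := by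
  obtain rfl : u' = u := by
    by_contra hne
    refine hAu ((measure_congr (hA.inter (ae_eq_refl (U ⁻¹' {u})))).trans ?_)
    convert measure_empty (μ := μ)
    ext ω
    simp only [Set.mem_inter_iff, Set.mem_ofPred_eq, Set.mem_preimage, Set.mem_singleton_iff,
      Set.mem_empty_iff_false, iff_false, not_and]
    exact fun ⟨_, h₁⟩ h₂ => hne (h₁.symm.trans h₂)
  have hprod : μ A = μ (W ⁻¹' {x}) * μ (U ⁻¹' {u'}) :=
    (measure_congr hA).trans (hWU.measure_inter_preimage_eq_mul _ _
      (measurableSet_singleton x) (measurableSet_singleton u'))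
  have hx : μ (W ⁻¹' {x}) ≠ 0 := fun h =>
    hAu (measure_mono_null Set.inter_subset_left (by rw [hprod, h, zero_mul]))
  have hk := hW.measure_preimage_singleton hx
  have hk0 : (k : ℝ≥0∞) ≠ 0 := ENNReal.inv_ne_top.1 (hk ▸ measure_ne_top μ _)
  rw [hprod, hk, ← mul_assoc, ENNReal.mul_inv_cancel hk0 (ENNReal.natCast_ne_top k), one_mul]

end UnifOn

theorem stmt7_general {Ω : Type} [MeasurableSpace Ω] (μ : Measure Ω) [IsProbabilityMeasure μ]
    (Z U Xt Yt : Ω → ℕ)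
    (hU : Measurable U)
    (a b c : ℕ)
    (hZu : UnifOn μ Z c)
    (hUcard : {u | μ (U ⁻¹' {u}) ≠ 0}.encard = 2)
    (hUnonunif : ∃ u₁ u₂ : ℕ, μ (U ⁻¹' {u₁}) ≠ 0 ∧ μ (U ⁻¹' {u₂}) ≠ 0 ∧
      μ (U ⁻¹' {u₁}) ≠ μ (U ⁻¹' {u₂}))
    (hXtu : UnifOn μ Xt a) (hYtu : UnifOn μ Yt b)
    (hind2 : IndepFun (fun ω => (Xt ω, Yt ω)) U μ)
    (hsmi : ∀ z : ℕ, μ (Z ⁻¹' {z}) ≠ 0 →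
      (∃ x u, μ {ω | Xt ω = x ∧ U ω = u} ≠ 0 ∧
          μ {ω | (Z ω = z) ≠ (Xt ω = x ∧ U ω = u)} = 0) ∨
      (∃ y u, μ {ω | Yt ω = y ∧ U ω = u} ≠ 0 ∧
          μ {ω | (Z ω = z) ≠ (Yt ω = y ∧ U ω = u)} = 0)) :
    c = a + b ∧ ∃ u₀ : ℕ, μ (U ⁻¹' {u₀}) = (a : ℝ≥0∞) / ((a : ℝ≥0∞) + (b : ℝ≥0∞)) := by
  have hXU : IndepFun Xt U μ := hind2.comp measurable_fst measurable_id
  have hYU : IndepFun Yt U μ := hind2.comp measurable_snd measurable_id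
  have hmass : ∀ u, μ (U ⁻¹' {u}) ≠ 0 →
      μ (U ⁻¹' {u}) = a / c ∨ μ (U ⁻¹' {u}) = b / c := by
    intro u hu
    obtain ⟨z, hz⟩ := exists_measure_preimage_singleton_inter_ne_zero Z hu
    have hz₀ : μ (Z ⁻¹' {z}) ≠ 0 := fun h => hz (measure_mono_null Set.inter_subset_left h)
    have hzc := hZu.measure_preimage_singleton hz₀
    rcases hsmi z hz₀ with ⟨x, u', -, hx⟩ | ⟨y, u', -, hy⟩
    · left
      rw [hXtu.measure_preimage_eq_mul_of_ae_eq_inter (A := Z ⁻¹' {z}) hXU (ae_iff.2 hx) hz,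
        hzc, div_eq_mul_inv]
    · right
      rw [hYtu.measure_preimage_eq_mul_of_ae_eq_inter (A := Z ⁻¹' {z}) hYU (ae_iff.2 hy) hz,
        hzc, div_eq_mul_inv]
  obtain ⟨u₁, u₂, h₁, h₂, hne⟩ := hUnonunif
  have hsum := measure_preimage_add_eq_one_of_encard_eq_two hU hUcard
    (fun h => hne (by rw [h])) h₁ h₂
  rcases hmass u₁ h₁ with e₁ | e₁ <;> rcases hmass u₂ h₂ with e₂ | e₂
  · exact absurd (e₁.trans e₂.symm) hne
  · rw [e₁, e₂] at hsum
    obtain rfl := eq_add_of_div_add_div_eq_one hsum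
    exact ⟨rfl, u₁, by rw [e₁, Nat.cast_add]⟩
  · rw [e₁, e₂, add_comm] at hsum
    obtain rfl := eq_add_of_div_add_div_eq_one hsum
    exact ⟨rfl, u₂, by rw [e₂, Nat.cast_add]⟩
  · exact absurd (e₁.trans e₂.symm) hne

theorem stmt7 {Ω : Type} [MeasurableSpace Ω] (μ : Measure Ω) [IsProbabilityMeasure μ]
    (X Y Z U Xt Yt : Ω → ℕ)
    (hZ : Measurable Z) (hU : Measurable U) (hXt : Measurable Xt) (hYt : Measurable Yt)
    (a b c : ℕ) (ha : 1 ≤ a) (hb : 1 ≤ b) (hab : a ≠ b)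
    (hXu : UnifOn μ X a) (hYu : UnifOn μ Y b) (hZu : UnifOn μ Z c)
    (hUcard : {u | μ (U ⁻¹' {u}) ≠ 0}.encard = 2)
    (hUnonunif : ∃ u₁ u₂ : ℕ, μ (U ⁻¹' {u₁}) ≠ 0 ∧ μ (U ⁻¹' {u₂}) ≠ 0 ∧
      μ (U ⁻¹' {u₁}) ≠ μ (U ⁻¹' {u₂}))
    (hXtu : UnifOn μ Xt a) (hYtu : UnifOn μ Yt b)
    (hind1 : IndepFun Xt Yt μ)
    (hind2 : IndepFun (fun ω => (Xt ω, Yt ω)) U μ)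
    (hUZ : ∃ f : ℕ → ℕ, U =ᵐ[μ] fun ω => f (Z ω))
    (hZfun : ∃ g : ℕ × ℕ × ℕ → ℕ, Z =ᵐ[μ] fun ω => g (Xt ω, Yt ω, U ω))
    (hsmi : ∀ z : ℕ, μ (Z ⁻¹' {z}) ≠ 0 →
      (∃ x u, μ {ω | Xt ω = x ∧ U ω = u} ≠ 0 ∧
          μ {ω | (Z ω = z) ≠ (Xt ω = x ∧ U ω = u)} = 0) ∨
      (∃ y u, μ {ω | Yt ω = y ∧ U ω = u} ≠ 0 ∧
          μ {ω | (Z ω = z) ≠ (Yt ω = y ∧ U ω = u)} = 0)) :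
    c = a + b ∧ ∃ u₀ : ℕ, μ (U ⁻¹' {u₀}) = (a : ℝ≥0∞) / ((a : ℝ≥0∞) + (b : ℝ≥0∞)) :=
  stmt7_general μ Z U Xt Yt hU a b c hZu hUcard hUnonunif hXtu hYtu hind2 hsmi
end

section
/- Let X be a random variable with values in [0,1] and let A ⊆ [0,1] be measurable with P(P(X ∈ A | Y) ∈ {0,1}) < 1 for some random variable Y. Define U conditionally on (X,Y=y) as Unif[0, P(X∈A|Y=y)] if X ∈ A and Unif[P(X∈A|Y=y), 1] if X ∉ A. Then U ∼ Unif[0,1], U is independent of Y, and U is not independent of X. -/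
/-!
Conditionally on `Y`, the event `{X ∈ A}` has probability `G = P(X ∈ A | Y)`, and mixing the
uniform law on `[0, G]` with weight `G` and the uniform law on `[G, 1]` with weight `1 - G`
gives the uniform law on `[0, 1]`, whatever the value of `G`. Hence `U` is uniform and
independent of `Y`. On the other hand `P(U ≤ 1/2, X ∈ A) = E[min(1/2, G)]`, which is at least
`E[G] / 2 = P(U ≤ 1/2) P(X ∈ A)`, with equality only if `G ∈ {0, 1}` almost surely.
-/

open MeasureTheory ProbabilityTheory Set
open scoped ENNReal Classical

local notation "𝕌" => volume.restrict (Icc (0 : ℝ) 1)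

section PullOut

variable {Ω : Type*} {m m0 : MeasurableSpace Ω} {μ : Measure[m0] Ω}

theorem lintegral_mul_condLExp (hm : m ≤ m0) [SigmaFinite (μ.trim hm)] {X : Ω → ℝ≥0∞}
    (hX : AEMeasurable X μ) {h : Ω → ℝ≥0∞} (hh : Measurable[m] h) :
    ∫⁻ ω, h ω * μ⁻[X|m] ω ∂μ = ∫⁻ ω, h ω * X ω ∂μ := by
  have hcond : Measurable μ⁻[X|m] := measurable_condLExp' m μ X
  refine @Measurable.ennreal_induction _ m
    (fun h => ∫⁻ ω, h ω * μ⁻[X|m] ω ∂μ = ∫⁻ ω, h ω * X ω ∂μ) ?_ ?_ ?_ _ hh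
  · intro c t ht
    simp only [← indicator_mul_left]
    rw [lintegral_indicator (hm t ht), lintegral_indicator (hm t ht),
      lintegral_const_mul _ hcond, lintegral_const_mul'' _ hX.restrict,
      setLIntegral_condLExp hm μ X ht]
  · intro f g _ hf _ ihf ihg
    have hf' : Measurable fun ω => f ω * μ⁻[X|m] ω := (hf.mono hm le_rfl).mul hcond
    have hfX : AEMeasurable (fun ω => f ω * X ω) μ := (hf.mono hm le_rfl).aemeasurable.mul hX
    simp only [Pi.add_apply, add_mul]
    rw [lintegral_add_left hf', lintegral_add_left' hfX, ihf, ihg]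
  · intro f hf hmono ih
    simp only [ENNReal.iSup_mul]
    rw [lintegral_iSup (f := fun n ω => f n ω * μ⁻[X|m] ω)
        (fun n => ((hf n).mono hm le_rfl).mul hcond)
        (fun i j hij ω => mul_le_mul_left (hmono hij ω) _),
      lintegral_iSup' (f := fun n ω => f n ω * X ω)
        (fun n => ((hf n).mono hm le_rfl).aemeasurable.mul hX)
        (ae_of_all _ fun ω i j hij => mul_le_mul_left (hmono hij ω) _)]
    simp only [ih]

theorem setLIntegral_eq_lintegral_ofReal_condExp_mul (hm : m ≤ m0) [IsFiniteMeasure μ]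
    {B : Set Ω} (hB : MeasurableSet B) {h : Ω → ℝ≥0∞} (hh : Measurable[m] h) :
    ∫⁻ ω in B, h ω ∂μ = ∫⁻ ω, ENNReal.ofReal ((μ⟦B | m⟧) ω) * h ω ∂μ := by
  have hofReal : (fun ω => ENNReal.ofReal (B.indicator (fun _ => (1 : ℝ)) ω)) =
      B.indicator fun _ => 1 := by
    ext ω
    by_cases hω : ω ∈ B <;> simp [hω]
  calc ∫⁻ ω in B, h ω ∂μ = ∫⁻ ω, h ω * B.indicator (fun _ => 1) ω ∂μ := by
        simp only [← indicator_mul_right, mul_one, lintegral_indicator hB]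
    _ = ∫⁻ ω, h ω * μ⁻[B.indicator (fun _ => 1)|m] ω ∂μ :=
        (lintegral_mul_condLExp hm (aemeasurable_one.indicator hB) hh).symm
    _ = _ := by
        rw [← hofReal]
        refine lintegral_congr_ae ?_
        filter_upwards [condLExp_ofReal m ((integrable_const 1).indicator hB)
          (ae_of_all _ fun ω => indicator_nonneg (fun _ _ => zero_le_one) ω)] with ω hω
        rw [hω, mul_comm]

theorem condExp_indicator_compl_ae_eq (hm : m ≤ m0) [IsFiniteMeasure μ] {B : Set Ω}
    (hB : MeasurableSet B) : μ⟦Bᶜ | m⟧ =ᵐ[μ] 1 - μ⟦B | m⟧ := by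
  rw [indicator_compl]
  filter_upwards [condExp_sub (integrable_const (1 : ℝ)) ((integrable_const 1).indicator hB) m]
    with ω hω
  rw [hω, condExp_const hm]
  rfl

theorem ae_condExp_indicator_mem_Icc (hm : m ≤ m0) [IsFiniteMeasure μ] {B : Set Ω}
    (hB : MeasurableSet B) : ∀ᵐ ω ∂μ, (μ⟦B | m⟧) ω ∈ Icc 0 1 := by
  have hnonneg (C : Set Ω) : 0 ≤ᵐ[μ] μ⟦C | m⟧ :=
    condExp_nonneg (ae_of_all _ fun ω => indicator_nonneg (fun _ _ => zero_le_one) ω)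
  filter_upwards [hnonneg B, hnonneg Bᶜ, condExp_indicator_compl_ae_eq hm hB]
    with ω h₀ h₁ hcompl
  rw [hcompl, Pi.sub_apply, Pi.one_apply, Pi.zero_apply, sub_nonneg] at h₁
  exact ⟨h₀, h₁⟩

theorem lintegral_piecewise_eq_condExp (hm : m ≤ m0) [IsFiniteMeasure μ] {B : Set Ω}
    (hB : MeasurableSet B) {h₁ h₂ : Ω → ℝ≥0∞} (hh₁ : Measurable[m] h₁) (hh₂ : Measurable[m] h₂) :
    ∫⁻ ω, B.piecewise h₁ h₂ ω ∂μ =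
      ∫⁻ ω, ENNReal.ofReal ((μ⟦B | m⟧) ω) * h₁ ω + ENNReal.ofReal (1 - (μ⟦B | m⟧) ω) * h₂ ω ∂μ := by
  have hcompl : ∫⁻ ω in Bᶜ, h₂ ω ∂μ = ∫⁻ ω, ENNReal.ofReal (1 - (μ⟦B | m⟧) ω) * h₂ ω ∂μ := by
    rw [setLIntegral_eq_lintegral_ofReal_condExp_mul hm hB.compl hh₂]
    refine lintegral_congr_ae ?_
    filter_upwards [condExp_indicator_compl_ae_eq hm hB] with ω hω
    rw [hω, Pi.sub_apply, Pi.one_apply]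
  simp only [← indicator_add_compl_eq_piecewise, Pi.add_apply]
  rw [lintegral_add_left ((hh₁.mono hm le_rfl).indicator hB),
    lintegral_indicator hB, lintegral_indicator hB.compl, hcompl,
    setLIntegral_eq_lintegral_ofReal_condExp_mul hm hB hh₁, ← lintegral_add_left]
  exact (stronglyMeasurable_condExp.measurable.mono hm le_rfl).ennreal_ofReal.mul
    (hh₁.mono hm le_rfl)

end PullOut

instance isProbabilityMeasure_uniform_Icc : IsProbabilityMeasure 𝕌 :=
  ⟨by rw [Measure.restrict_apply_univ, Real.volume_Icc, sub_zero, ENNReal.ofReal_one]⟩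

theorem measurable_uniform_preimage {f : ℝ → ℝ → ℝ} (hf : Measurable (Function.uncurry f))
    {S : Set ℝ} (hS : MeasurableSet S) : Measurable fun c => 𝕌 (f c ⁻¹' S) :=
  measurable_measure_prodMk_left (hf hS)

theorem volume_inter_Icc_eq_ofReal_mul_uniform (S : Set ℝ) (a : ℝ) {d : ℝ} (hd : 0 ≤ d) :
    volume (S ∩ Icc a (a + d)) = ENNReal.ofReal d * 𝕌 ((fun t => a + d * t) ⁻¹' S) := by
  rcases hd.eq_or_lt with rfl | hd
  · simp [measure_mono_null inter_subset_right (measure_singleton a)]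
  have hIcc : (fun t => a + d * t) ⁻¹' Icc a (a + d) = Icc 0 1 := by
    ext t
    simp only [mem_preimage, mem_Icc, le_add_iff_nonneg_right, add_le_add_iff_left]
    rw [mul_nonneg_iff_of_pos_left hd, mul_le_iff_le_one_right hd]
  have hinv : ENNReal.ofReal d * ENNReal.ofReal |d⁻¹| = 1 := by
    rw [← ENNReal.ofReal_mul hd.le, abs_of_pos (inv_pos.2 hd), mul_inv_cancel₀ hd.ne',
      ENNReal.ofReal_one]
  rw [Measure.restrict_apply' measurableSet_Icc, ← hIcc, ← preimage_inter,
    show (fun t => a + d * t) = (a + ·) ∘ (d * ·) from rfl, preimage_comp,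
    Real.volume_preimage_mul_left hd.ne', measure_preimage_add, ← mul_assoc, hinv, one_mul]

theorem volume_inter_Icc_add_volume_inter_Icc {S : Set ℝ} (hS : MeasurableSet S) {a b c : ℝ}
    (hab : a ≤ b) (hbc : b ≤ c) :
    volume (S ∩ Icc a b) + volume (S ∩ Icc b c) = volume (S ∩ Icc a c) := by
  have hnull : volume (S ∩ Icc a b ∩ (S ∩ Icc b c)) = 0 :=
    measure_mono_null (fun x hx => le_antisymm hx.1.2.2 hx.2.2.1) (measure_singleton b)
  rw [← measure_union₀ (hS.inter measurableSet_Icc).nullMeasurableSet hnull,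
    ← inter_union_distrib_left, Icc_union_Icc_eq_Icc hab hbc]

theorem uniform_eq_mixture {S : Set ℝ} (hS : MeasurableSet S) {c : ℝ} (hc : c ∈ Icc 0 1) :
    ENNReal.ofReal c * 𝕌 ((c * ·) ⁻¹' S) +
      ENNReal.ofReal (1 - c) * 𝕌 ((fun t => c + (1 - c) * t) ⁻¹' S) = 𝕌 S := by
  have hlow := volume_inter_Icc_eq_ofReal_mul_uniform S 0 hc.1
  have hup := volume_inter_Icc_eq_ofReal_mul_uniform S c (sub_nonneg.2 hc.2)
  simp only [zero_add, add_sub_cancel] at hlow hup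
  rw [← hlow, ← hup, volume_inter_Icc_add_volume_inter_Icc hS hc.1 hc.2,
    Measure.restrict_apply' measurableSet_Icc]

section SplitUniform

variable {Ω : Type*} {m m0 : MeasurableSpace Ω} {μ : Measure[m0] Ω} {B : Set Ω}

noncomputable def splitUniform (B : Set Ω) (G : Ω → ℝ) (p : Ω × ℝ) : ℝ :=
  if p.1 ∈ B then G p.1 * p.2 else G p.1 + (1 - G p.1) * p.2

theorem measurable_splitUniform (hB : MeasurableSet B) {G : Ω → ℝ} (hG : Measurable G) :
    Measurable (splitUniform B G) :=
  Measurable.ite (measurable_fst hB) (by fun_prop) (by fun_prop)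

theorem measurable_splitUniform_condExp (hm : m ≤ m0) (hB : MeasurableSet B) :
    Measurable (splitUniform B (μ⟦B | m⟧)) :=
  measurable_splitUniform hB (stronglyMeasurable_condExp.measurable.mono hm le_rfl)

theorem splitUniform_ae_eq {G G' : Ω → ℝ} (h : G =ᵐ[μ] G') (ν : Measure ℝ) [SFinite ν] :
    splitUniform B G =ᵐ[μ.prod ν] splitUniform B G' := by
  filter_upwards [Measure.quasiMeasurePreserving_fst.tendsto_ae h] with p hp
  have hp' : G p.1 = G' p.1 := hp
  simp only [splitUniform, hp']

theorem uniform_preimage_splitUniform_inter (G : Ω → ℝ) (S : Set ℝ) (s : Set Ω) (ω : Ω) :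
    𝕌 (Prod.mk ω ⁻¹' (splitUniform B G ⁻¹' S ∩ s ×ˢ univ)) =
      B.piecewise (s.indicator fun ω => 𝕌 ((G ω * ·) ⁻¹' S))
        (s.indicator fun ω => 𝕌 ((fun t => G ω + (1 - G ω) * t) ⁻¹' S)) ω := by
  by_cases hωs : ω ∈ s
  · rw [preimage_inter, mk_preimage_prod_right hωs, inter_univ]
    by_cases hωB : ω ∈ B <;> simp only [piecewise, hωB, hωs, indicator_of_mem] <;>
      congr 1 <;> ext t <;> simp [splitUniform, hωB]
  · rw [preimage_inter, mk_preimage_prod_right_eq_empty hωs, inter_empty, measure_empty]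
    by_cases hωB : ω ∈ B <;> simp [piecewise, hωB, hωs]

theorem prod_splitUniform_preimage_inter_prod_univ [IsFiniteMeasure μ] (hm : m ≤ m0)
    (hB : MeasurableSet B) {S : Set ℝ} (hS : MeasurableSet S) {s : Set Ω}
    (hs : MeasurableSet[m] s) :
    (μ.prod 𝕌) (splitUniform B (μ⟦B | m⟧) ⁻¹' S ∩ s ×ˢ univ) = 𝕌 S * μ s := by
  set G := μ⟦B | m⟧
  have hG : Measurable[m] G := stronglyMeasurable_condExp.measurable
  have hlow : Measurable[m] fun ω => 𝕌 ((G ω * ·) ⁻¹' S) :=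
    (measurable_uniform_preimage (f := (· * ·)) (by fun_prop) hS).comp hG
  have hup : Measurable[m] fun ω => 𝕌 ((fun t => G ω + (1 - G ω) * t) ⁻¹' S) :=
    (measurable_uniform_preimage (f := fun c t => c + (1 - c) * t) (by fun_prop) hS).comp hG
  rw [Measure.prod_apply ((measurable_splitUniform_condExp hm hB hS).inter
    ((hm s hs).prod .univ))]
  simp_rw [uniform_preimage_splitUniform_inter]
  rw [lintegral_piecewise_eq_condExp hm hB (hlow.indicator hs) (hup.indicator hs),
    ← lintegral_indicator_const (hm s hs)]
  refine lintegral_congr_ae ?_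
  filter_upwards [ae_condExp_indicator_mem_Icc hm hB] with ω hω
  by_cases hωs : ω ∈ s
  · simp only [indicator_of_mem hωs]
    exact uniform_eq_mixture hS hω
  · simp [indicator_of_notMem hωs]

theorem prod_splitUniform_preimage_inter_prod_univ_self [IsFiniteMeasure μ] (hm : m ≤ m0)
    (hB : MeasurableSet B) {S : Set ℝ} (hS : MeasurableSet S) :
    (μ.prod 𝕌) (splitUniform B (μ⟦B | m⟧) ⁻¹' S ∩ B ×ˢ univ) =
      ∫⁻ ω, ENNReal.ofReal ((μ⟦B | m⟧) ω) * 𝕌 (((μ⟦B | m⟧) ω * ·) ⁻¹' S) ∂μ := by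
  have hlow : Measurable[m] fun ω => 𝕌 (((μ⟦B | m⟧) ω * ·) ⁻¹' S) :=
    (measurable_uniform_preimage (f := (· * ·)) (by fun_prop) hS).comp
      stronglyMeasurable_condExp.measurable
  rw [Measure.prod_apply ((measurable_splitUniform_condExp hm hB hS).inter (hB.prod .univ)),
    ← setLIntegral_eq_lintegral_ofReal_condExp_mul hm hB hlow, ← lintegral_indicator hB]
  refine lintegral_congr fun ω => ?_
  rw [uniform_preimage_splitUniform_inter]
  by_cases hωB : ω ∈ B <;> simp [hωB]

theorem prod_splitUniform_preimage_Icc_inter_prod_univ_self [IsFiniteMeasure μ] (hm : m ≤ m0)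
    (hB : MeasurableSet B) (a : ℝ) :
    (μ.prod 𝕌) (splitUniform B (μ⟦B | m⟧) ⁻¹' Icc 0 a ∩ B ×ˢ univ) =
      ∫⁻ ω, ENNReal.ofReal (min a ((μ⟦B | m⟧) ω)) ∂μ := by
  rw [prod_splitUniform_preimage_inter_prod_univ_self hm hB measurableSet_Icc]
  refine lintegral_congr_ae ?_
  filter_upwards [ae_condExp_indicator_mem_Icc hm hB] with ω hω
  have h := volume_inter_Icc_eq_ofReal_mul_uniform (Icc 0 a) 0 hω.1
  simp only [zero_add] at h
  rw [Icc_inter_Icc, max_self, Real.volume_Icc, sub_zero] at h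
  exact h.symm

theorem map_splitUniform [IsProbabilityMeasure μ] (hm : m ≤ m0) (hB : MeasurableSet B) :
    (μ.prod 𝕌).map (splitUniform B (μ⟦B | m⟧)) = 𝕌 := by
  ext S hS
  have h := prod_splitUniform_preimage_inter_prod_univ (μ := μ) hm hB hS MeasurableSet.univ
  rwa [univ_prod_univ, inter_univ, measure_univ, mul_one,
    ← Measure.map_apply (measurable_splitUniform_condExp hm hB) hS] at h

theorem indepFun_splitUniform [IsProbabilityMeasure μ] (hm : m ≤ m0) (hB : MeasurableSet B)
    {β : Type*} [MeasurableSpace β] {Z : Ω → β} (hZ : Measurable[m] Z) :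
    IndepFun (splitUniform B (μ⟦B | m⟧)) (fun p => Z p.1) (μ.prod 𝕌) := by
  rw [indepFun_iff_measure_inter_preimage_eq_mul]
  intro S T hS hT
  rw [show (fun p : Ω × ℝ => Z p.1) ⁻¹' T = (Z ⁻¹' T) ×ˢ univ by rw [prod_univ]; rfl,
    prod_splitUniform_preimage_inter_prod_univ hm hB hS (hZ hT), Measure.prod_prod,
    measure_univ, mul_one, ← Measure.map_apply (measurable_splitUniform_condExp hm hB) hS,
    map_splitUniform hm hB]

theorem ae_condExp_eq_zero_or_one_of_indepFun [IsProbabilityMeasure μ] (hm : m ≤ m0)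
    {β : Type*} [MeasurableSpace β] {Z : Ω → β} (hZ : Measurable Z) {A : Set β}
    (hA : MeasurableSet A)
    (hind : IndepFun (splitUniform (Z ⁻¹' A) (μ⟦Z ⁻¹' A | m⟧)) (fun p => Z p.1) (μ.prod 𝕌)) :
    ∀ᵐ ω ∂μ, (μ⟦Z ⁻¹' A | m⟧) ω = 0 ∨ (μ⟦Z ⁻¹' A | m⟧) ω = 1 := by
  set B := Z ⁻¹' A
  have hB : MeasurableSet B := hZ hA
  set G := μ⟦B | m⟧
  have hG : Measurable[m] G := stronglyMeasurable_condExp.measurable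
  have hG01 := ae_condExp_indicator_mem_Icc (μ := μ) hm hB
  have hμB : μ B = ∫⁻ ω, ENNReal.ofReal (G ω) ∂μ := by
    simpa using setLIntegral_eq_lintegral_ofReal_condExp_mul hm hB (@measurable_const _ _ _ m 1)
  have hjoint := prod_splitUniform_preimage_Icc_inter_prod_univ_self (μ := μ) hm hB 2⁻¹
  have hhalf : (μ.prod 𝕌) (splitUniform B G ⁻¹' Icc 0 2⁻¹) = ENNReal.ofReal 2⁻¹ := by
    rw [← Measure.map_apply (measurable_splitUniform_condExp hm hB) measurableSet_Icc,
      map_splitUniform hm hB, Measure.restrict_apply measurableSet_Icc, Icc_inter_Icc]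
    norm_num
  have hprod := (indepFun_iff_measure_inter_preimage_eq_mul.1 hind) (Icc 0 2⁻¹) A
    measurableSet_Icc hA
  rw [show (fun p : Ω × ℝ => Z p.1) ⁻¹' A = B ×ˢ univ by rw [prod_univ]; rfl, hjoint, hhalf,
    Measure.prod_prod, measure_univ, mul_one, hμB,
    ← lintegral_const_mul' _ _ ENNReal.ofReal_ne_top] at hprod
  have hle : ∀ᵐ ω ∂μ,
      ENNReal.ofReal 2⁻¹ * ENNReal.ofReal (G ω) ≤ ENNReal.ofReal (min 2⁻¹ (G ω)) := by
    filter_upwards [hG01] with ω hω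
    rw [← ENNReal.ofReal_mul (by norm_num)]
    exact ENNReal.ofReal_le_ofReal (le_min (by linarith [hω.2]) (by linarith [hω.1]))
  have hfin : ∫⁻ ω, ENNReal.ofReal 2⁻¹ * ENNReal.ofReal (G ω) ∂μ ≠ ∞ := by
    rw [lintegral_const_mul' _ _ ENNReal.ofReal_ne_top, ← hμB]
    exact ENNReal.mul_ne_top ENNReal.ofReal_ne_top (measure_ne_top μ B)
  have heq := ae_eq_of_ae_le_of_lintegral_le hle hfin
    (measurable_const.min (hG.mono hm le_rfl)).ennreal_ofReal.aemeasurable hprod.le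
  filter_upwards [heq, hG01] with ω h hω
  rw [← ENNReal.ofReal_mul (by norm_num), ENNReal.ofReal_eq_ofReal_iff (by nlinarith [hω.1])
    (le_min (by norm_num) hω.1)] at h
  rcases min_cases 2⁻¹ (G ω) with ⟨hmin, -⟩ | ⟨hmin, -⟩ <;> rw [hmin] at h
  · right; linarith
  · left; linarith

end SplitUniform

theorem stmt16 {Ω : Type} [MeasurableSpace Ω] (μ : Measure Ω) [IsProbabilityMeasure μ]
    (X Y : Ω → ℝ) (hX : Measurable X) (hY : Measurable Y)
    (A : Set ℝ) (hA : MeasurableSet A)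
    (g : Ω → ℝ)
    (hg : g =ᵐ[μ]
      μ[(X ⁻¹' A).indicator (fun _ => (1 : ℝ)) | MeasurableSpace.comap Y inferInstance])
    (hnd : μ {ω | g ω = 0 ∨ g ω = 1} < 1)
    (U : Ω × ℝ → ℝ)
    (hU : ∀ p : Ω × ℝ,
      U p = if X p.1 ∈ A then g p.1 * p.2 else g p.1 + (1 - g p.1) * p.2) :
    Measure.map U (μ.prod (volume.restrict (Set.Icc (0:ℝ) 1))) =
        volume.restrict (Set.Icc (0:ℝ) 1) ∧
    IndepFun U (fun p => Y p.1) (μ.prod (volume.restrict (Set.Icc (0:ℝ) 1))) ∧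
    ¬ IndepFun U (fun p => X p.1) (μ.prod (volume.restrict (Set.Icc (0:ℝ) 1))) := by
  have hm := hY.comap_le
  have hUV : U =ᵐ[μ.prod 𝕌]
      splitUniform (X ⁻¹' A) (μ⟦X ⁻¹' A | MeasurableSpace.comap Y inferInstance⟧) := by
    rw [show U = splitUniform (X ⁻¹' A) g from funext hU]
    exact splitUniform_ae_eq hg 𝕌
  refine ⟨?_, ?_, fun hind => ?_⟩
  · rw [Measure.map_congr hUV]
    exact map_splitUniform hm (hX hA)
  · exact (indepFun_splitUniform hm (hX hA) (comap_measurable Y)).congr hUV.symm .rfl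
  · have h01 := ae_condExp_eq_zero_or_one_of_indepFun hm hX hA (hind.congr hUV .rfl)
    have hg01 : ∀ᵐ ω ∂μ, g ω = 0 ∨ g ω = 1 := by
      filter_upwards [h01, hg] with ω h hω
      rwa [hω]
    rw [measure_congr (ae_eq_univ.2 hg01), measure_univ] at hnd
    exact lt_irrefl 1 hnd
end

section
/- For a random variable X with values in [0,1]: X is not a.s. a function of Y if and only if there exists a random variable U (on an extension of the probability space) with U independent of Y but U not independent of X. -/
/-!
If `X` is not a.s. a function of `Y`, some event `{X ≤ q}` has a conditional probability
`p(Y) = P(X ≤ q | Y)` that is not a.s. `0` or `1`: otherwise every conditional law of `X` given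
`Y` is a Dirac mass, sitting at the conditional mean, and `X = E[X | Y]` a.s. With `T` uniform on
`[0, 1]` and independent of `(X, Y)`, put `U = 1{T < (1{X ≤ q} + 1 - p(Y)) / 2}`. Then
`P(U = 1 | Y) = 1/2`, so `U` is independent of `Y`, whereas
`P(U = 1, X ≤ q) - P(U = 1) P(X ≤ q) = E[p(Y) (1 - p(Y))] / 2 > 0`.
Conversely, if `X = f(Y)` a.s., then everything independent of `Y` is independent of `X`.
-/

open MeasureTheory ProbabilityTheory Set
open scoped ENNReal unitInterval

theorem exists_ae_eq_of_measure_Iic_rat_eq_zero_or_one (ν : Measure ℝ) [IsProbabilityMeasure ν]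
    (h : ∀ q : ℚ, ν (Iic (q : ℝ)) = 0 ∨ ν (Iic (q : ℝ)) = 1) : ∃ c, ∀ᵐ x ∂ν, x = c := by
  have hcdf : ∀ᵐ x ∂ν, ∀ q : ℚ, x ≤ (q : ℝ) ↔ ν (Iic (q : ℝ)) = 1 := by
    refine ae_all_iff.2 fun q ↦ ?_
    rcases h q with h0 | h1
    · filter_upwards [measure_eq_zero_iff_ae_notMem.1 h0] with x hx
      simpa [h0] using hx
    · filter_upwards [(ae_mem_iff_measure_eq measurableSet_Iic.nullMeasurableSet).2
        (h1.trans measure_univ.symm)] with x hx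
      simpa [h1] using hx
  obtain ⟨c, hc⟩ := hcdf.exists
  refine ⟨c, ?_⟩
  filter_upwards [hcdf] with x hx
  exact le_antisymm (le_of_forall_lt_rat_imp_le fun q hq ↦ (hx q).2 ((hc q).1 hq.le))
    (le_of_forall_lt_rat_imp_le fun q hq ↦ (hc q).2 ((hx q).1 hq.le))

section
variable {Ω β : Type*} [MeasurableSpace Ω] [MeasurableSpace β] {μ : Measure Ω}
  [IsFiniteMeasure μ] {Y : Ω → β}

theorem exists_measurable_ae_eq_comp_of_condDistrib_Iic_rat {X : Ω → ℝ} (hX : Measurable X)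
    (hY : Measurable Y) (h : ∀ q : ℚ, ∀ᵐ y ∂μ.map Y,
      condDistrib X Y μ y (Iic (q : ℝ)) = 0 ∨ condDistrib X Y μ y (Iic (q : ℝ)) = 1) :
    ∃ f : β → ℝ, Measurable f ∧ X =ᵐ[μ] fun ω ↦ f (Y ω) := by
  set f : β → ℝ := fun y ↦ ∫ x, x ∂condDistrib X Y μ y
  have hf : Measurable f := (measurable_snd.stronglyMeasurable.integral_condDistrib).measurable
  have hdirac : ∀ᵐ y ∂μ.map Y, ∀ᵐ x ∂condDistrib X Y μ y, x = f y := by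
    filter_upwards [ae_all_iff.2 h] with y hy
    obtain ⟨c, hc⟩ := exists_ae_eq_of_measure_Iic_rat_eq_zero_or_one _ hy
    have hfc : f y = c := by simp [f, integral_congr_ae hc]
    rwa [hfc]
  have hgraph : MeasurableSet {p : β × ℝ | p.2 = f p.1} :=
    measurableSet_eq_fun measurable_snd (hf.comp measurable_fst)
  have := Measure.ae_compProd_of_ae_ae hgraph hdirac
  rw [compProd_map_condDistrib hX.aemeasurable] at this
  exact ⟨f, hf, ae_of_ae_map (hY.prodMk hX).aemeasurable this⟩

end

theorem ae_eq_comp_of_map_prodMk_eq {Ω Ω' α β : Type*} [MeasurableSpace Ω] [MeasurableSpace Ω']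
    [MeasurableSpace α] [MeasurableEq α] [MeasurableSpace β] {μ : Measure Ω} {μ' : Measure Ω'}
    {X : Ω → α} {Y : Ω → β} {X' : Ω' → α} {Y' : Ω' → β} (hX : Measurable X) (hY : Measurable Y)
    (hX' : Measurable X') (hY' : Measurable Y')
    (hmap : μ'.map (fun ω ↦ (X' ω, Y' ω)) = μ.map (fun ω ↦ (X ω, Y ω)))
    {f : β → α} (hf : Measurable f) (h : X =ᵐ[μ] fun ω ↦ f (Y ω)) :
    X' =ᵐ[μ'] fun ω ↦ f (Y' ω) :=
  IdentDistrib.ae_snd ⟨(hX.prodMk hY).aemeasurable, (hX'.prodMk hY').aemeasurable, hmap.symm⟩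
    (measurableSet_eq_fun measurable_fst (hf.comp measurable_snd)) h

theorem indicator_one_indepFun_iff {Ω γ : Type*} [MeasurableSpace Ω] [mγ : MeasurableSpace γ]
    {ν : Measure Ω} [IsProbabilityMeasure ν] {C : Set Ω} (hC : MeasurableSet C) {Z : Ω → γ}
    (hZ : Measurable Z) :
    IndepFun (C.indicator (1 : Ω → ℝ)) Z ν ↔
      ∀ t, MeasurableSet t → ν (C ∩ Z ⁻¹' t) = ν C * ν (Z ⁻¹' t) := by
  have hsets : IndepSets {C} {s | MeasurableSet[mγ.comap Z] s} ν ↔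
      ∀ t, MeasurableSet t → ν (C ∩ Z ⁻¹' t) = ν C * ν (Z ⁻¹' t) := by
    rw [IndepSets_iff]
    exact ⟨fun h t ht ↦ h _ _ rfl ⟨t, ht, rfl⟩, by rintro h _ _ rfl ⟨t, ht, rfl⟩; exact h t ht⟩
  rw [← hsets]
  refine ⟨IndepFun.singleton_indepSets_of_indicator, fun h ↦ ?_⟩
  refine Indep.indicator_indepFun 1 (MeasurableSpace.measurableSet_generateFrom (mem_singleton C))
    (h.indep (m1 := .generateFrom {C}) (MeasurableSpace.generateFrom_le fun _ ht ↦ ht ▸ hC)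
      hZ.comap_le (.singleton C) (@MeasurableSpace.isPiSystem_measurableSet _ (mγ.comap Z)) rfl
      (@MeasurableSpace.generateFrom_measurableSet _ (mγ.comap Z)).symm)

theorem prod_volume_setOf_lt_inter_fst_preimage {Ω : Type*} [MeasurableSpace Ω] (μ : Measure Ω)
    [SFinite μ] {h : Ω → I} (hh : Measurable h) {E : Set Ω} (hE : MeasurableSet E) :
    (μ.prod volume) ({z | z.2 < h z.1} ∩ Prod.fst ⁻¹' E) =
      ∫⁻ ω in E, ENNReal.ofReal (h ω) ∂μ := by
  have hC : MeasurableSet {z : Ω × I | z.2 < h z.1} :=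
    measurableSet_lt measurable_snd (hh.comp measurable_fst)
  rw [Measure.prod_apply (hC.inter (measurable_fst hE)), ← lintegral_indicator hE]
  congr 1 with ω
  by_cases hω : ω ∈ E
  · have hslice : Prod.mk ω ⁻¹' ({z | z.2 < h z.1} ∩ Prod.fst ⁻¹' E) = Iio (h ω) := by
      ext; simp [hω]
    simp [hslice, hω]
  · have hslice : Prod.mk ω ⁻¹' ({z | z.2 < h z.1} ∩ Prod.fst ⁻¹' E) = ∅ := by
      ext; simp [hω]
    simp [hslice, hω]

section
variable {Ω α β : Type*} [MeasurableSpace Ω] [MeasurableSpace α] [StandardBorelSpace α]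
  [Nonempty α] [MeasurableSpace β] {μ : Measure Ω} {X : Ω → α} {Y : Ω → β} {s : Set α}

theorem setLIntegral_preimage_comp_eq_lintegral_mul_condDistrib [IsFiniteMeasure μ]
    (hX : Measurable X) (hY : Measurable Y) {g : β → ℝ≥0∞} (hg : Measurable g)
    (hs : MeasurableSet s) :
    ∫⁻ ω in X ⁻¹' s, g (Y ω) ∂μ = ∫⁻ y, g y * condDistrib X Y μ y s ∂μ.map Y := by
  have hF : Measurable fun p : β × α ↦ g p.1 * s.indicator 1 p.2 :=
    (hg.comp measurable_fst).mul ((measurable_one.indicator hs).comp measurable_snd)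
  calc ∫⁻ ω in X ⁻¹' s, g (Y ω) ∂μ = ∫⁻ ω, g (Y ω) * s.indicator 1 (X ω) ∂μ := by
        rw [← lintegral_indicator (hX hs)]
        congr 1 with ω
        by_cases hω : X ω ∈ s <;> simp [hω]
    _ = ∫⁻ p, g p.1 * s.indicator 1 p.2 ∂(μ.map Y ⊗ₘ condDistrib X Y μ) := by
        rw [compProd_map_condDistrib hX.aemeasurable, lintegral_map hF (hY.prodMk hX)]
    _ = ∫⁻ y, g y * condDistrib X Y μ y s ∂μ.map Y := by
        rw [Measure.lintegral_compProd hF]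
        simp only [lintegral_const_mul _ (measurable_one.indicator hs),
          lintegral_indicator_one hs]

variable [IsProbabilityMeasure μ]

variable (μ X Y s) in
/-- `(1{X ∈ s} + 1 - P(X ∈ s | Y)) / 2`, with `1 - P(X ∈ s | Y)` taken as `P(X ∉ s | Y)` so that
no truncated subtraction in `ℝ≥0∞` appears in its integrals. -/
noncomputable def coinBias (ω : Ω) : I :=
  ⟨((X ⁻¹' s).indicator 1 ω + (condDistrib X Y μ (Y ω)).real sᶜ) / 2, by
    have h0 : 0 ≤ (condDistrib X Y μ (Y ω)).real sᶜ := measureReal_nonneg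
    have h1 : (condDistrib X Y μ (Y ω)).real sᶜ ≤ 1 := measureReal_le_one
    constructor <;> by_cases hω : ω ∈ X ⁻¹' s <;> simp [hω] <;> linarith⟩

theorem measurable_coinBias (hX : Measurable X) (hY : Measurable Y) (hs : MeasurableSet s) :
    Measurable (coinBias μ X Y s) :=
  Measurable.subtype_mk <| ((measurable_one.indicator (hX hs)).add
    ((Kernel.measurable_coe _ hs.compl).ennreal_toReal.comp hY)).div_const 2

theorem ofReal_coinBias (ω : Ω) :
    ENNReal.ofReal (coinBias μ X Y s ω) =
      2⁻¹ * ((X ⁻¹' s).indicator 1 ω + condDistrib X Y μ (Y ω) sᶜ) := by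
  have hind : ENNReal.ofReal ((X ⁻¹' s).indicator 1 ω) = (X ⁻¹' s).indicator 1 ω := by
    by_cases hω : ω ∈ X ⁻¹' s <;> simp [hω]
  have hind0 : (0 : ℝ) ≤ (X ⁻¹' s).indicator 1 ω := indicator_apply_nonneg fun _ ↦ zero_le_one
  rw [coinBias, ENNReal.ofReal_div_of_pos two_pos,
    ENNReal.ofReal_add hind0 measureReal_nonneg, hind,
    ofReal_measureReal, ENNReal.ofReal_ofNat, ENNReal.div_eq_inv_mul]

theorem setLIntegral_ofReal_coinBias (hX : Measurable X) (hs : MeasurableSet s) (E : Set Ω) :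
    ∫⁻ ω in E, ENNReal.ofReal (coinBias μ X Y s ω) ∂μ =
      2⁻¹ * (μ (X ⁻¹' s ∩ E) + ∫⁻ ω in E, condDistrib X Y μ (Y ω) sᶜ ∂μ) := by
  simp_rw [ofReal_coinBias]
  rw [lintegral_const_mul' _ _ (by simp),
    lintegral_add_left (measurable_one.indicator (hX hs)), lintegral_indicator_one (hX hs),
    Measure.restrict_apply (hX hs)]

variable (μ X Y s) in
def coinSet : Set (Ω × I) := {z | z.2 < coinBias μ X Y s z.1}

theorem measurableSet_coinSet (hX : Measurable X) (hY : Measurable Y) (hs : MeasurableSet s) :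
    MeasurableSet (coinSet μ X Y s) :=
  measurableSet_lt measurable_snd ((measurable_coinBias hX hY hs).comp measurable_fst)

variable (μ X Y s) in
noncomputable def coin : Ω × I → ℝ := (coinSet μ X Y s).indicator 1

theorem measurable_coin (hX : Measurable X) (hY : Measurable Y) (hs : MeasurableSet s) :
    Measurable (coin μ X Y s) :=
  measurable_one.indicator (measurableSet_coinSet hX hY hs)

theorem prod_volume_coinSet_inter_fst_preimage (hX : Measurable X) (hY : Measurable Y)
    (hs : MeasurableSet s) {E : Set Ω} (hE : MeasurableSet E) :
    (μ.prod volume) (coinSet μ X Y s ∩ Prod.fst ⁻¹' E) =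
      2⁻¹ * (μ (X ⁻¹' s ∩ E) + ∫⁻ ω in E, condDistrib X Y μ (Y ω) sᶜ ∂μ) :=
  (prod_volume_setOf_lt_inter_fst_preimage μ (measurable_coinBias hX hY hs) hE).trans
    (setLIntegral_ofReal_coinBias hX hs E)

theorem prod_volume_coinSet_inter_preimage_comp_fst (hX : Measurable X) (hY : Measurable Y)
    (hs : MeasurableSet s) {t : Set β} (ht : MeasurableSet t) :
    (μ.prod volume) (coinSet μ X Y s ∩ (Y ∘ Prod.fst) ⁻¹' t) = 2⁻¹ * μ (Y ⁻¹' t) := by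
  rw [preimage_comp, prod_volume_coinSet_inter_fst_preimage hX hY hs (hY ht),
    setLIntegral_preimage_condDistrib hY hX.aemeasurable hs.compl ht, preimage_compl,
    ← sdiff_eq, inter_comm, measure_inter_add_sdiff _ (hX hs)]

theorem prod_volume_coinSet (hX : Measurable X) (hY : Measurable Y) (hs : MeasurableSet s) :
    (μ.prod volume) (coinSet μ X Y s) = 2⁻¹ := by
  simpa using prod_volume_coinSet_inter_preimage_comp_fst (μ := μ) hX hY hs MeasurableSet.univ

theorem indepFun_coin_comp_fst (hX : Measurable X) (hY : Measurable Y) (hs : MeasurableSet s) :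
    IndepFun (coin μ X Y s) (Y ∘ Prod.fst) (μ.prod volume) := by
  rw [coin, indicator_one_indepFun_iff (measurableSet_coinSet hX hY hs) (hY.comp measurable_fst)]
  intro t ht
  rw [prod_volume_coinSet_inter_preimage_comp_fst hX hY hs ht, prod_volume_coinSet hX hY hs,
    preimage_comp, measurePreserving_fst.measure_preimage (hY ht).nullMeasurableSet]

theorem not_indepFun_coin_comp_fst (hX : Measurable X) (hY : Measurable Y)
    (hs : MeasurableSet s)
    (h : ¬ ∀ᵐ y ∂μ.map Y, condDistrib X Y μ y s = 0 ∨ condDistrib X Y μ y s = 1) :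
    ¬ IndepFun (coin μ X Y s) (X ∘ Prod.fst) (μ.prod volume) := by
  rw [coin, indicator_one_indepFun_iff (measurableSet_coinSet hX hY hs) (hX.comp measurable_fst)]
  intro hind
  have hvar : ∫⁻ y, condDistrib X Y μ y sᶜ * condDistrib X Y μ y s ∂μ.map Y ≠ 0 := by
    have hm : Measurable fun y ↦ condDistrib X Y μ y sᶜ * condDistrib X Y μ y s :=
      (Kernel.measurable_coe _ hs.compl).mul (Kernel.measurable_coe _ hs)
    rw [Ne, lintegral_eq_zero_iff hm]
    refine fun h0 ↦ h ?_
    filter_upwards [h0] with y hy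
    simpa [prob_compl_eq_zero_iff hs, or_comm] using hy
  have hprod := hind s hs
  rw [preimage_comp, prod_volume_coinSet_inter_fst_preimage hX hY hs (hX hs), inter_self,
    setLIntegral_preimage_comp_eq_lintegral_mul_condDistrib hX hY
      (Kernel.measurable_coe _ hs.compl) hs, prod_volume_coinSet hX hY hs,
    measurePreserving_fst.measure_preimage (hX hs).nullMeasurableSet] at hprod
  exact hvar (by simpa [ENNReal.mul_right_inj, measure_ne_top] using hprod)

end

theorem stmt17_general {Ω : Type} [MeasurableSpace Ω] (μ : Measure Ω) [IsProbabilityMeasure μ]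
    (X Y : Ω → ℝ) (hX : Measurable X) (hY : Measurable Y) :
    (¬ ∃ f : ℝ → ℝ, Measurable f ∧ X =ᵐ[μ] fun ω => f (Y ω)) ↔
      ∃ (Ω' : Type) (_ : MeasurableSpace Ω') (μ' : Measure Ω'),
        IsProbabilityMeasure μ' ∧
        ∃ X' Y' U : Ω' → ℝ,
          Measurable X' ∧ Measurable Y' ∧ Measurable U ∧
          Measure.map (fun ω => (X' ω, Y' ω)) μ' = Measure.map (fun ω => (X ω, Y ω)) μ ∧
          IndepFun U Y' μ' ∧ ¬ IndepFun U X' μ' := by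
  constructor
  · intro hnot
    obtain ⟨q, hq⟩ : ∃ q : ℚ, ¬ ∀ᵐ y ∂μ.map Y,
        condDistrib X Y μ y (Iic (q : ℝ)) = 0 ∨ condDistrib X Y μ y (Iic (q : ℝ)) = 1 := by
      by_contra! h
      exact hnot (exists_measurable_ae_eq_comp_of_condDistrib_Iic_rat hX hY h)
    have hmap : (μ.prod (volume : Measure I)).map ((fun ω ↦ (X ω, Y ω)) ∘ Prod.fst) =
        μ.map fun ω ↦ (X ω, Y ω) := by
      rw [← Measure.map_map (hX.prodMk hY) measurable_fst, measurePreserving_fst.map_eq]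
    exact ⟨Ω × I, _, μ.prod volume, inferInstance, X ∘ Prod.fst, Y ∘ Prod.fst,
      coin μ X Y (Iic (q : ℝ)), hX.comp measurable_fst, hY.comp measurable_fst,
      measurable_coin hX hY measurableSet_Iic, hmap,
      indepFun_coin_comp_fst hX hY measurableSet_Iic,
      not_indepFun_coin_comp_fst hX hY measurableSet_Iic hq⟩
  · rintro ⟨Ω', _, μ', _, X', Y', U, hX', hY', -, hmap, hUY, hUX⟩ ⟨f, hf, hXf⟩
    exact hUX ((hUY.comp measurable_id hf).congr .rfl
      (ae_eq_comp_of_map_prodMk_eq hX hY hX' hY' hmap hf hXf).symm)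

theorem stmt17 {Ω : Type} [MeasurableSpace Ω] (μ : Measure Ω) [IsProbabilityMeasure μ]
    (X Y : Ω → ℝ) (hX : Measurable X) (hY : Measurable Y)
    (hXr : ∀ ω, X ω ∈ Set.Icc (0:ℝ) 1) (hYr : ∀ ω, Y ω ∈ Set.Icc (0:ℝ) 1) :
    (¬ ∃ f : ℝ → ℝ, Measurable f ∧ X =ᵐ[μ] fun ω => f (Y ω)) ↔
      ∃ (Ω' : Type) (_ : MeasurableSpace Ω') (μ' : Measure Ω'),
        IsProbabilityMeasure μ' ∧
        ∃ X' Y' U : Ω' → ℝ,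
          Measurable X' ∧ Measurable Y' ∧ Measurable U ∧
          Measure.map (fun ω => (X' ω, Y' ω)) μ' = Measure.map (fun ω => (X ω, Y ω)) μ ∧
          IndepFun U Y' μ' ∧ ¬ IndepFun U X' μ' :=
  stmt17_general μ X Y hX hY
end
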